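/- arXiv:1907.08771 — 7 statements merged into one kernel-verified Lean document; each statement's English description precedes it below -/
import Mathlib

section
/- High-Frequency Maximality Theorem: under the stated assumptions, the optimal expected logarithmic growth of the buy-and-holder never exceeds that of the high-frequency trader; that is, g_n* ≤ g_1*. -/
/-!
Write `R = 1 + X` for gross returns. A buy-and-holder who starts with risky fraction `K` and sees
gross return `y` ends up holding the fraction `f = K y / (1 - K + K y) ∈ [0, 1]`, because
`1 - K + K y z = (1 - K + K y) (1 - f + f z)`. As the next gross return `z` is independent of `y`,
each period therefore adds at most `E[log (1 - f + f z)] ≤ g_1*` to the expected log-wealth, so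
`E[log (1 - K + K ∏ R_k)] ≤ n g_1*` for every `K`.
-/

open MeasureTheory ProbabilityTheory Real Set

lemma one_sub_add_mul_mem_Icc {K t a b : ℝ} (hK : K ∈ Icc (0 : ℝ) 1) (ht : t ∈ Icc a b) :
    1 - K + K * t ∈ Icc (min 1 a) (max 1 b) := by
  obtain ⟨hK0, hK1⟩ := hK
  constructor
  · rcases le_total 1 t with h | h
    · nlinarith [min_le_left 1 a]
    · nlinarith [min_le_right 1 a, ht.1]
  · rcases le_total 1 t with h | h
    · nlinarith [le_max_right 1 b, ht.2]
    · nlinarith [le_max_left 1 b]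

lemma one_sub_add_mul_pos {K t : ℝ} (hK : K ∈ Icc (0 : ℝ) 1) (ht : 0 < t) :
    0 < 1 - K + K * t :=
  (lt_min one_pos ht).trans_le (one_sub_add_mul_mem_Icc hK ⟨le_rfl, le_rfl⟩).1

lemma log_one_sub_add_mul_mem_Icc {K t a b : ℝ} (hK : K ∈ Icc (0 : ℝ) 1) (ha : 0 < a)
    (ht : t ∈ Icc a b) :
    log (1 - K + K * t) ∈ Icc (log (min 1 a)) (log (max 1 b)) := by
  obtain ⟨hlo, hhi⟩ := one_sub_add_mul_mem_Icc hK ht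
  have hmin : 0 < min 1 a := lt_min one_pos ha
  exact ⟨log_le_log hmin hlo, log_le_log (hmin.trans_le hlo) hhi⟩

noncomputable def rebalancedFraction (K y : ℝ) : ℝ := K * y / (1 - K + K * y)

lemma rebalancedFraction_mem_Icc {K y : ℝ} (hK : K ∈ Icc (0 : ℝ) 1) (hy : 0 < y) :
    rebalancedFraction K y ∈ Icc (0 : ℝ) 1 := by
  have hden := one_sub_add_mul_pos hK hy
  exact ⟨div_nonneg (mul_nonneg hK.1 hy.le) hden.le,
    (div_le_one hden).2 (by linarith [hK.2])⟩

lemma log_one_sub_add_mul_mul {K y z : ℝ} (hK : K ∈ Icc (0 : ℝ) 1) (hy : 0 < y) (hz : 0 < z) :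
    log (1 - K + K * (y * z)) =
      log (1 - K + K * y) + log (1 - rebalancedFraction K y + rebalancedFraction K y * z) := by
  have hden := one_sub_add_mul_pos hK hy
  have hfactor : 1 - K + K * (y * z) =
      (1 - K + K * y) * (1 - rebalancedFraction K y + rebalancedFraction K y * z) := by
    unfold rebalancedFraction
    field_simp
    ring
  rw [hfactor, log_mul hden.ne' (one_sub_add_mul_pos (rebalancedFraction_mem_Icc hK hy) hz).ne']

lemma Finset.prod_mem_Icc_pow {ι R : Type*} [CommMonoidWithZero R] [Preorder R] [ZeroLEOneClass R]
    [PosMulMono R] {s : Finset ι} {f : ι → R} {a b : R} (ha : 0 ≤ a)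
    (hf : ∀ i ∈ s, f i ∈ Set.Icc a b) :
    ∏ i ∈ s, f i ∈ Set.Icc (a ^ s.card) (b ^ s.card) := by
  rw [← Finset.prod_const, ← Finset.prod_const]
  exact ⟨Finset.prod_le_prod (fun _ _ => ha) fun i hi => (hf i hi).1,
    Finset.prod_le_prod (fun i hi => ha.trans (hf i hi).1) fun i hi => (hf i hi).2⟩

section Integrals

variable {α : Type*} [MeasurableSpace α] {μ : Measure α}

lemma integrable_log_one_sub_add_mul [IsFiniteMeasure μ] {Y : α → ℝ} (hY : AEMeasurable Y μ)
    {K a b : ℝ} (hK : K ∈ Icc (0 : ℝ) 1) (ha : 0 < a) (hYab : ∀ᵐ x ∂μ, Y x ∈ Icc a b) :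
    Integrable (fun x => log (1 - K + K * Y x)) μ :=
  Integrable.of_mem_Icc _ _ (by fun_prop)
    (hYab.mono fun _ hx => log_one_sub_add_mul_mem_Icc hK ha hx)

lemma integral_log_one_sub_add_mul_le [IsProbabilityMeasure μ] {Y : α → ℝ}
    (hY : AEMeasurable Y μ) {K a b : ℝ} (hK : K ∈ Icc (0 : ℝ) 1) (ha : 0 < a)
    (hYab : ∀ᵐ x ∂μ, Y x ∈ Icc a b) :
    ∫ x, log (1 - K + K * Y x) ∂μ ≤ log (max 1 b) := by
  calc ∫ x, log (1 - K + K * Y x) ∂μ ≤ ∫ _, log (max 1 b) ∂μ :=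
        integral_mono_ae (integrable_log_one_sub_add_mul hY hK ha hYab) (integrable_const _)
          (hYab.mono fun _ hx => (log_one_sub_add_mul_mem_Icc hK ha hx).2)
    _ = log (max 1 b) := by simp

end Integrals

lemma integral_log_one_sub_add_mul_mul_le {ν : Measure ℝ} [IsProbabilityMeasure ν]
    {c d G K y : ℝ} (hc : 0 < c) (hν : ∀ᵐ z ∂ν, z ∈ Icc c d)
    (hG : ∀ f ∈ Icc (0 : ℝ) 1, ∫ z, log (1 - f + f * z) ∂ν ≤ G) (hK : K ∈ Icc (0 : ℝ) 1)
    (hy : 0 < y) :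
    ∫ z, log (1 - K + K * (y * z)) ∂ν ≤ log (1 - K + K * y) + G := by
  set f := rebalancedFraction K y
  have hf : f ∈ Icc (0 : ℝ) 1 := rebalancedFraction_mem_Icc hK hy
  calc ∫ z, log (1 - K + K * (y * z)) ∂ν
      = ∫ z, (log (1 - K + K * y) + log (1 - f + f * z)) ∂ν :=
        integral_congr_ae (hν.mono fun z hz => log_one_sub_add_mul_mul hK hy (hc.trans_le hz.1))
    _ = log (1 - K + K * y) + ∫ z, log (1 - f + f * z) ∂ν := by
        rw [integral_add (integrable_const _)
          (integrable_log_one_sub_add_mul aemeasurable_id' hf hc hν)]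
        simp
    _ ≤ log (1 - K + K * y) + G := by linarith [hG f hf]

section Independence

variable {Ω : Type*} [MeasurableSpace Ω] {μ : Measure Ω} [IsProbabilityMeasure μ]

lemma ProbabilityTheory.IndepFun.integral_log_one_sub_add_mul_mul_le {Y Z : Ω → ℝ}
    (hY : Measurable Y) (hZ : Measurable Z) (hYZ : IndepFun Y Z μ) {a b c d G K : ℝ}
    (ha : 0 < a) (hc : 0 < c) (hYab : ∀ᵐ ω ∂μ, Y ω ∈ Icc a b) (hZcd : ∀ᵐ ω ∂μ, Z ω ∈ Icc c d)
    (hG : ∀ f ∈ Icc (0 : ℝ) 1, ∫ ω, log (1 - f + f * Z ω) ∂μ ≤ G) (hK : K ∈ Icc (0 : ℝ) 1) :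
    ∫ ω, log (1 - K + K * (Y ω * Z ω)) ∂μ ≤ ∫ ω, log (1 - K + K * Y ω) ∂μ + G := by
  have := Measure.isProbabilityMeasure_map (μ := μ) hY.aemeasurable
  have := Measure.isProbabilityMeasure_map (μ := μ) hZ.aemeasurable
  set F : ℝ × ℝ → ℝ := fun p => log (1 - K + K * (p.1 * p.2))
  have hFm : Measurable F := by fun_prop
  have hlogm : ∀ f : ℝ, Measurable fun y : ℝ => log (1 - f + f * y) := fun f => by fun_prop
  have hmap : μ.map (fun ω => (Y ω, Z ω)) = (μ.map Y).prod (μ.map Z) :=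
    hYZ.map_prod_eq_prod_map_map hY.aemeasurable hZ.aemeasurable
  have hYZab : ∀ᵐ ω ∂μ, Y ω * Z ω ∈ Icc (a * c) (b * d) := by
    filter_upwards [hYab, hZcd] with ω hy hz
    exact ⟨mul_le_mul hy.1 hz.1 hc.le (ha.le.trans hy.1),
      mul_le_mul hy.2 hz.2 (hc.le.trans hz.1) ((ha.le.trans hy.1).trans hy.2)⟩
  have hFint : Integrable F ((μ.map Y).prod (μ.map Z)) := by
    rw [← hmap, integrable_map_measure hFm.aestronglyMeasurable (hY.prodMk hZ).aemeasurable]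
    exact integrable_log_one_sub_add_mul (by fun_prop) hK (mul_pos ha hc) hYZab
  have hlogY : Integrable (fun y => log (1 - K + K * y)) (μ.map Y) :=
    integrable_log_one_sub_add_mul aemeasurable_id' hK ha
      ((ae_map_iff hY.aemeasurable measurableSet_Icc).2 hYab)
  have hinner : ∀ᵐ y ∂μ.map Y, ∫ z, F (y, z) ∂μ.map Z ≤ log (1 - K + K * y) + G := by
    filter_upwards [(ae_map_iff hY.aemeasurable measurableSet_Icc).2 hYab] with y hy
    refine _root_.integral_log_one_sub_add_mul_mul_le hc
      ((ae_map_iff hZ.aemeasurable measurableSet_Icc).2 hZcd) (fun f hf => ?_) hK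
      (ha.trans_le hy.1)
    rw [integral_map hZ.aemeasurable (hlogm f).aestronglyMeasurable]
    exact hG f hf
  calc ∫ ω, log (1 - K + K * (Y ω * Z ω)) ∂μ
      = ∫ y, ∫ z, F (y, z) ∂μ.map Z ∂μ.map Y := by
        rw [← integral_prod _ hFint, ← hmap, integral_map (hY.prodMk hZ).aemeasurable
          hFm.aestronglyMeasurable]
    _ ≤ ∫ y, (log (1 - K + K * y) + G) ∂μ.map Y :=
        integral_mono_ae hFint.integral_prod_left (hlogY.add (integrable_const G)) hinner
    _ = ∫ ω, log (1 - K + K * Y ω) ∂μ + G := by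
        rw [integral_add hlogY (integrable_const G),
          integral_map hY.aemeasurable (hlogm K).aestronglyMeasurable]
        simp

lemma ProbabilityTheory.iIndepFun.integral_log_one_sub_add_mul_prod_le {ι : Type*}
    {R : ι → Ω → ℝ} (hR : ∀ i, Measurable (R i)) (hindep : iIndepFun R μ) {a b G K : ℝ} (ha : 0 < a)
    (hRab : ∀ i, ∀ᵐ ω ∂μ, R i ω ∈ Icc a b)
    (hG : ∀ i, ∀ f ∈ Icc (0 : ℝ) 1, ∫ ω, log (1 - f + f * R i ω) ∂μ ≤ G)
    (hK : K ∈ Icc (0 : ℝ) 1) (s : Finset ι) :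
    ∫ ω, log (1 - K + K * ∏ i ∈ s, R i ω) ∂μ ≤ s.card * G := by
  classical
  induction s using Finset.induction_on with
  | empty => simp
  | insert j s hj ih =>
    have hprod : ∀ᵐ ω ∂μ, (∏ i ∈ s, R i) ω ∈ Icc (a ^ s.card) (b ^ s.card) := by
      filter_upwards [(Filter.eventually_all_finset s).2 fun i _ => hRab i] with ω hω
      rw [Finset.prod_apply]
      exact Finset.prod_mem_Icc_pow ha.le hω
    have hstep := IndepFun.integral_log_one_sub_add_mul_mul_le
      (Finset.prod_fn s R ▸ Finset.measurable_prod s fun i _ => hR i) (hR j)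
      (hindep.indepFun_finsetProd_of_notMem hR hj) (pow_pos ha _) ha hprod (hRab j) (hG j) hK
    simp only [Finset.prod_apply] at hstep
    calc ∫ ω, log (1 - K + K * ∏ i ∈ insert j s, R i ω) ∂μ
        = ∫ ω, log (1 - K + K * ((∏ i ∈ s, R i ω) * R j ω)) ∂μ := by
          simp_rw [Finset.prod_insert hj, mul_comm (R j _)]
      _ ≤ s.card * G + G := by linarith
      _ = (insert j s).card * G := by
          rw [Finset.card_insert_of_notMem hj]
          push_cast
          ring

end Independence

theorem high_frequency_maximality_general
    {Ω : Type*} [MeasureSpace Ω] [IsProbabilityMeasure (ℙ : Measure Ω)]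
    (n : ℕ) (hn : 1 ≤ n) (X : ℕ → Ω → ℝ)
    (hmeas : ∀ i, Measurable (X i))
    (hindep : iIndepFun (fun i : Fin n => X i) ℙ)
    (hident : ∀ i < n, IdentDistrib (X i) (X 0) ℙ ℙ)
    (Xmin Xmax : ℝ) (hXmin : -1 < Xmin)
    (hbdd : ∀ i < n, ∀ᵐ ω ∂ℙ, X i ω ∈ Set.Icc Xmin Xmax) :
    (⨆ K : Set.Icc (0:ℝ) 1,
        (1 / (n : ℝ)) *
          ∫ ω, Real.log (1 + (K : ℝ) * (∏ k ∈ Finset.range n, (1 + X k ω) - 1)) ∂ℙ)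
      ≤ ⨆ K : Set.Icc (0:ℝ) 1, ∫ ω, Real.log (1 + (K : ℝ) * X 0 ω) ∂ℙ := by
  have hnet : ∀ f x : ℝ, 1 - f + f * (1 + x) = 1 + f * x := fun _ _ => by ring
  set R : Fin n → Ω → ℝ := fun i ω => 1 + X i ω
  have hR : ∀ i, Measurable (R i) := fun i => measurable_const.add (hmeas i)
  have hRab : ∀ i, ∀ᵐ ω ∂ℙ, R i ω ∈ Icc (1 + Xmin) (1 + Xmax) := fun i =>
    (hbdd i i.2).mono fun _ hx => ⟨by linarith [hx.1], by linarith [hx.2]⟩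
  have hpos : 0 < 1 + Xmin := by linarith
  have hgrowth_eq : ∀ i f, ∫ ω, log (1 - f + f * R i ω) ∂ℙ = ∫ ω, log (1 + f * X 0 ω) ∂ℙ :=
    fun i f => by
      simp only [R, hnet]
      exact ((hident i i.2).comp (by fun_prop : Measurable fun x => log (1 + f * x))).integral_eq
  have hle_sup : ∀ i, ∀ f ∈ Icc (0 : ℝ) 1, ∫ ω, log (1 - f + f * R i ω) ∂ℙ ≤
      ⨆ K : Icc (0 : ℝ) 1, ∫ ω, log (1 + K * X 0 ω) ∂ℙ := by
    refine fun i f hf => (hgrowth_eq i f).trans_le <|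
      le_ciSup (f := fun K : Icc (0 : ℝ) 1 => ∫ ω, log (1 + K * X 0 ω) ∂ℙ)
        ⟨log (max 1 (1 + Xmax)), ?_⟩ ⟨f, hf⟩
    rintro _ ⟨K, rfl⟩
    dsimp only
    rw [← hgrowth_eq i K]
    exact integral_log_one_sub_add_mul_le (hR i).aemeasurable K.2 hpos (hRab i)
  have : Nonempty (Icc (0 : ℝ) 1) := ⟨⟨0, left_mem_Icc.2 zero_le_one⟩⟩
  refine ciSup_le fun K => ?_
  have hRindep : iIndepFun R ℙ := hindep.comp _ fun _ => measurable_const.add measurable_id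
  have hbuy := hRindep.integral_log_one_sub_add_mul_prod_le hR hpos hRab hle_sup K.2 Finset.univ
  rw [Finset.card_univ, Fintype.card_fin] at hbuy
  have hcompound : ∀ ω,
      1 + K * (∏ k ∈ Finset.range n, (1 + X k ω) - 1) = 1 - K + K * ∏ i, R i ω :=
    fun ω => by rw [Fin.prod_univ_eq_prod_range (fun k => 1 + X k ω)]; ring
  simp_rw [hcompound]
  rw [one_div, inv_mul_le_iff₀ (by exact_mod_cast hn)]
  exact hbuy

/-- **High-Frequency Maximality Theorem.**
For i.i.d. returns `X 0, …, X (n-1)` bounded a.s. in `[Xmin, Xmax]` with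
`-1 < Xmin < 0 < Xmax`, the optimal expected logarithmic growth of the
buy-and-holder, `g_n* = sup_{K ∈ [0,1]} (1/n) E[log (1 + K 𝒳_n)]` with compound
return `𝒳_n = ∏_{k<n} (1 + X k) - 1`, never exceeds that of the high-frequency
trader, `g_1* = sup_{K ∈ [0,1]} E[log (1 + K X 0)]`. -/
theorem high_frequency_maximality
    {Ω : Type*} [MeasureSpace Ω] [IsProbabilityMeasure (ℙ : Measure Ω)]
    (n : ℕ) (hn : 1 ≤ n) (X : ℕ → Ω → ℝ)
    (hmeas : ∀ i, Measurable (X i))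
    (hindep : iIndepFun (fun i : Fin n => X i) ℙ)
    (hident : ∀ i < n, IdentDistrib (X i) (X 0) ℙ ℙ)
    (Xmin Xmax : ℝ) (hXmin : -1 < Xmin) (hXminNeg : Xmin < 0) (hXmaxPos : 0 < Xmax)
    (hbdd : ∀ i < n, ∀ᵐ ω ∂ℙ, X i ω ∈ Set.Icc Xmin Xmax) :
    (⨆ K : Set.Icc (0:ℝ) 1,
        (1 / (n : ℝ)) *
          ∫ ω, Real.log (1 + (K : ℝ) * (∏ k ∈ Finset.range n, (1 + X k ω) - 1)) ∂ℙ)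
      ≤ ⨆ K : Set.Icc (0:ℝ) 1, ∫ ω, Real.log (1 + (K : ℝ) * X 0 ω) ∂ℙ :=
  high_frequency_maximality_general n hn X hmeas hindep hident Xmin Xmax hXmin hbdd
end

section
/- For every n ≥ 2 and every K ∈ [0,1], the n-period buy-and-hold expected log-growth satisfies g_n(K) ≤ ((n−1)/n)·g_{n−1}* + (1/n)·g_1(K). -/
/-!
Write the `n`-period gross return as `P * (1 + y)`, with `y = X (n-1)` the last return and `P` the
gross return of the first `n - 1` periods. The buy-and-hold wealth then factors as
`1 + K (P (1 + y) - 1) = (1 + K y) (1 + κ (P - 1))`, where `κ = K (1 + y) / (1 + K y) ∈ [0, 1]` is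
the weight of the asset after it returned `y`. In expectation the first factor contributes
`g_1(K)`, as `X (n-1)` has the law of `X 0`. Since `y` is independent of `P`, integrating the
second factor first over `P` gives an `(n-1)`-period buy-and-hold growth with fraction `κ`, which is
at most `(n - 1) g_{n-1}*`.
-/

open MeasureTheory ProbabilityTheory Real Set

namespace ProbabilityTheory

variable {Ω : Type*} [MeasurableSpace Ω] {μ : Measure Ω}

lemma IndepFun.integral_comp_le [IsProbabilityMeasure μ]
    {α β : Type*} [MeasurableSpace α] [MeasurableSpace β] {Y : Ω → α} {Z : Ω → β}
    (hYZ : IndepFun Y Z μ) (hY : Measurable Y) (hZ : Measurable Z) {f : α → β → ℝ}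
    (hf : Measurable (Function.uncurry f)) (hint : Integrable (fun ω => f (Y ω) (Z ω)) μ)
    {c : ℝ} (hc : ∀ᵐ y ∂μ.map Y, ∫ ω, f y (Z ω) ∂μ ≤ c) :
    ∫ ω, f (Y ω) (Z ω) ∂μ ≤ c := by
  have hmap : μ.map (fun ω => (Y ω, Z ω)) = (μ.map Y).prod (μ.map Z) :=
    hYZ.map_prod_eq_prod_map_map hY.aemeasurable hZ.aemeasurable
  have hint' : Integrable (Function.uncurry f) ((μ.map Y).prod (μ.map Z)) := by
    rw [← hmap]
    exact (integrable_map_measure hf.aestronglyMeasurable (hY.prodMk hZ).aemeasurable).2 hint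
  calc ∫ ω, f (Y ω) (Z ω) ∂μ = ∫ q, Function.uncurry f q ∂(μ.map Y).prod (μ.map Z) := by
        rw [← hmap, integral_map (hY.prodMk hZ).aemeasurable hf.aestronglyMeasurable]; rfl
    _ = ∫ y, ∫ z, f y z ∂μ.map Z ∂μ.map Y := integral_prod _ hint'
    _ ≤ ∫ _, c ∂μ.map Y := by
        refine integral_mono_ae hint'.integral_prod_left (integrable_const c) ?_
        filter_upwards [hc] with y hy
        have hfy : Measurable (f y) := hf.comp measurable_prodMk_left
        rwa [integral_map hZ.aemeasurable hfy.aestronglyMeasurable]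
    _ = c := by
        have := Measure.isProbabilityMeasure_map (μ := μ) hY.aemeasurable
        simp

lemma iIndepFun.indepFun_prod_range_fin {M : Type*} [CommMonoid M]
    [MeasurableSpace M] [MeasurableMul₂ M] {m : ℕ} {Y : ℕ → Ω → M}
    (hY : ∀ i, Measurable (Y i)) (hindep : iIndepFun (fun i : Fin (m + 1) => Y i) μ) :
    IndepFun (fun ω => ∏ k ∈ Finset.range m, Y k ω) (Y m) μ := by
  have hlast : Fin.last m ∉ Finset.univ.map Fin.castSuccEmb := by simp
  convert hindep.indepFun_finsetProd_of_notMem (fun i => hY i) hlast using 1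
  · ext ω
    simp [Finset.prod_apply, ← Fin.prod_univ_eq_prod_range]
  · simp

end ProbabilityTheory

namespace BuyAndHold

lemma prod_mem_Icc_pow {ι : Type*} (s : Finset ι) {f : ι → ℝ} {a b : ℝ} (ha : 0 ≤ a)
    (hf : ∀ i ∈ s, f i ∈ Icc a b) : ∏ i ∈ s, f i ∈ Icc (a ^ s.card) (b ^ s.card) := by
  rw [← Finset.prod_const, ← Finset.prod_const]
  exact ⟨Finset.prod_le_prod (fun _ _ => ha) fun i hi => (hf i hi).1,
    Finset.prod_le_prod (fun i hi => ha.trans (hf i hi).1) fun i hi => (hf i hi).2⟩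

lemma le_mul_iSup_one_div_mul {ι : Type*} {g : ι → ℝ} (hg : BddAbove (range g)) {m : ℝ}
    (hm : 0 < m) (i : ι) : g i ≤ m * ⨆ j, 1 / m * g j := by
  rw [← mul_iSup_of_nonneg (by positivity), ← mul_assoc, mul_one_div_cancel hm.ne', one_mul]
  exact le_ciSup hg i

lemma one_add_mul_sub_one_pos {c p : ℝ} (hc : c ∈ Icc (0 : ℝ) 1) (hp : 0 < p) :
    0 < 1 + c * (p - 1) := by
  rcases le_total p 1 with hp1 | hp1
  · nlinarith [mul_nonneg (sub_nonneg.2 hc.2) (sub_nonneg.2 hp1)]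
  · nlinarith [mul_nonneg hc.1 (sub_nonneg.2 hp1)]

lemma one_add_mul_pos {K y : ℝ} (hK : K ∈ Icc (0 : ℝ) 1) (hy : -1 < y) : 0 < 1 + K * y := by
  simpa using one_add_mul_sub_one_pos hK (by linarith : 0 < 1 + y)

lemma abs_log_one_add_mul_sub_one_le {c p : ℝ} (hc : c ∈ Icc (0 : ℝ) 1) (hp : 0 < p) :
    |log (1 + c * (p - 1))| ≤ |log p| := by
  have hpos := one_add_mul_sub_one_pos hc hp
  rcases le_total p 1 with hp1 | hp1
  · have h1 : p ≤ 1 + c * (p - 1) := by nlinarith [hc.1, hc.2]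
    have h2 : 1 + c * (p - 1) ≤ 1 := by nlinarith [hc.1, hc.2]
    rw [abs_of_nonpos (log_nonpos hpos.le h2), abs_of_nonpos (log_nonpos hp.le hp1)]
    exact neg_le_neg (log_le_log hp h1)
  · have h1 : 1 + c * (p - 1) ≤ p := by nlinarith [hc.1, hc.2]
    have h2 : 1 ≤ 1 + c * (p - 1) := by nlinarith [hc.1, hc.2]
    rw [abs_of_nonneg (log_nonneg h2), abs_of_nonneg (log_nonneg hp1)]
    exact log_le_log hpos h1

noncomputable def driftedFraction (K y : ℝ) : ℝ := K * (1 + y) / (1 + K * y)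

lemma driftedFraction_mem_Icc {K y : ℝ} (hK : K ∈ Icc (0 : ℝ) 1) (hy : -1 < y) :
    driftedFraction K y ∈ Icc (0 : ℝ) 1 := by
  have hd := one_add_mul_pos hK hy
  refine ⟨div_nonneg (mul_nonneg hK.1 (by linarith)) hd.le, ?_⟩
  rw [driftedFraction, div_le_one hd]
  linarith [hK.2]

lemma log_one_add_mul_mul_one_add_sub_one {K y p : ℝ} (hK : K ∈ Icc (0 : ℝ) 1) (hy : -1 < y)
    (hp : 0 < p) :
    log (1 + K * (p * (1 + y) - 1))
      = log (1 + K * y) + log (1 + driftedFraction K y * (p - 1)) := by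
  have hd := one_add_mul_pos hK hy
  have hfactor : 1 + K * (p * (1 + y) - 1)
      = (1 + K * y) * (1 + driftedFraction K y * (p - 1)) := by
    rw [driftedFraction]; field_simp; ring
  rw [hfactor, log_mul hd.ne' (one_add_mul_sub_one_pos (driftedFraction_mem_Icc hK hy) hp).ne']

variable {Ω : Type*} [MeasurableSpace Ω] {μ : Measure Ω}

lemma integrable_log_of_ae_mem_Icc [IsFiniteMeasure μ] {f : Ω → ℝ} (hf : AEMeasurable f μ)
    {a b : ℝ} (ha : 0 < a) (hab : ∀ᵐ ω ∂μ, f ω ∈ Icc a b) :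
    Integrable (fun ω => log (f ω)) μ := by
  refine (integrable_const (max |log a| |log b|)).mono'
    (measurable_log.comp_aemeasurable hf).aestronglyMeasurable ?_
  filter_upwards [hab] with ω ⟨haf, hfb⟩
  exact abs_le_max_abs_abs (log_le_log ha haf) (log_le_log (ha.trans_le haf) hfb)

lemma integrable_log_one_add_mul_sub_one {c P : Ω → ℝ} (hcm : AEMeasurable c μ)
    (hPm : AEMeasurable P μ) (hc : ∀ᵐ ω ∂μ, c ω ∈ Icc (0 : ℝ) 1) (hP : ∀ᵐ ω ∂μ, 0 < P ω)
    (hlogP : Integrable (fun ω => log (P ω)) μ) :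
    Integrable (fun ω => log (1 + c ω * (P ω - 1))) μ := by
  refine hlogP.abs.mono' (measurable_log.comp_aemeasurable (by fun_prop)).aestronglyMeasurable ?_
  filter_upwards [hc, hP] with ω hcω hPω
  exact abs_log_one_add_mul_sub_one_le hcω hPω

lemma integral_log_one_add_mul_sub_one_le {c : ℝ} (hc : c ∈ Icc (0 : ℝ) 1) {P : Ω → ℝ}
    (hPm : AEMeasurable P μ) (hP : ∀ᵐ ω ∂μ, 0 < P ω) (hlogP : Integrable (fun ω => log (P ω)) μ) :
    ∫ ω, log (1 + c * (P ω - 1)) ∂μ ≤ ∫ ω, |log (P ω)| ∂μ := by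
  refine integral_mono_ae (integrable_log_one_add_mul_sub_one aemeasurable_const hPm
    (ae_of_all _ fun _ => hc) hP hlogP) hlogP.abs ?_
  filter_upwards [hP] with ω hPω
  exact (le_abs_self _).trans (abs_log_one_add_mul_sub_one_le hc hPω)

lemma integral_log_one_add_mul_sub_one_le_mul_iSup {P : Ω → ℝ} (hPm : AEMeasurable P μ)
    (hP : ∀ᵐ ω ∂μ, 0 < P ω) (hlogP : Integrable (fun ω => log (P ω)) μ) {m : ℝ} (hm : 0 < m) :
    ∀ c ∈ Icc (0 : ℝ) 1, ∫ ω, log (1 + c * (P ω - 1)) ∂μ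
      ≤ m * ⨆ K : Icc (0 : ℝ) 1, 1 / m * ∫ ω, log (1 + K * (P ω - 1)) ∂μ :=
  fun c hc => le_mul_iSup_one_div_mul (g := fun c : Icc (0 : ℝ) 1 =>
    ∫ ω, log (1 + c * (P ω - 1)) ∂μ) ⟨∫ ω, |log (P ω)| ∂μ, forall_mem_range.2 fun c' =>
      integral_log_one_add_mul_sub_one_le c'.2 hPm hP hlogP⟩ hm ⟨c, hc⟩

lemma indepFun_prod_range_one_add {m : ℕ} {X : ℕ → Ω → ℝ} (hX : ∀ i, Measurable (X i))
    (hindep : iIndepFun (fun i : Fin (m + 1) => X i) μ) :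
    IndepFun (X m) (fun ω => ∏ k ∈ Finset.range m, (1 + X k ω)) μ := by
  simpa [Function.comp_def] using
    ((hindep.comp (fun _ x => 1 + x) fun _ => by fun_prop).indepFun_prod_range_fin
      (Y := fun k ω => 1 + X k ω) fun k => by fun_prop).symm.comp
      (measurable_id.sub_const 1) measurable_id

lemma integral_log_one_add_mul_mul_one_add_sub_one_le [IsProbabilityMeasure μ] {Y P : Ω → ℝ}
    (hYP : IndepFun Y P μ) (hY : Measurable Y) (hP : Measurable P) (hY1 : ∀ᵐ ω ∂μ, -1 < Y ω)
    (hP0 : ∀ᵐ ω ∂μ, 0 < P ω) (hlogY : Integrable (fun ω => log (1 + Y ω)) μ)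
    (hlogP : Integrable (fun ω => log (P ω)) μ) {K : ℝ} (hK : K ∈ Icc (0 : ℝ) 1) {G : ℝ}
    (hG : ∀ c ∈ Icc (0 : ℝ) 1, ∫ ω, log (1 + c * (P ω - 1)) ∂μ ≤ G) :
    ∫ ω, log (1 + K * (P ω * (1 + Y ω) - 1)) ∂μ ≤ ∫ ω, log (1 + K * Y ω) ∂μ + G := by
  have hsplit : (fun ω => log (1 + K * (P ω * (1 + Y ω) - 1))) =ᵐ[μ]
      fun ω => log (1 + K * Y ω) + log (1 + driftedFraction K (Y ω) * (P ω - 1)) := by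
    filter_upwards [hY1, hP0] with ω hYω hPω
    exact log_one_add_mul_mul_one_add_sub_one hK hYω hPω
  have hdrift : ∀ᵐ ω ∂μ, driftedFraction K (Y ω) ∈ Icc (0 : ℝ) 1 :=
    hY1.mono fun ω hYω => driftedFraction_mem_Icc hK hYω
  have hintY : Integrable (fun ω => log (1 + K * Y ω)) μ := by
    simpa using integrable_log_one_add_mul_sub_one (c := fun _ => K) (P := fun ω => 1 + Y ω)
      aemeasurable_const (by fun_prop) (ae_of_all _ fun _ => hK)
      (hY1.mono fun ω h => by linarith) hlogY
  have hintP := integrable_log_one_add_mul_sub_one (by unfold driftedFraction; fun_prop)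
    hP.aemeasurable hdrift hP0 hlogP
  rw [integral_congr_ae hsplit, integral_add hintY hintP]
  gcongr
  refine hYP.integral_comp_le hY hP (f := fun y p => log (1 + driftedFraction K y * (p - 1)))
    (by unfold driftedFraction; fun_prop) hintP ?_
  filter_upwards [(ae_map_iff hY.aemeasurable measurableSet_Ioi).2 hY1] with y hy
  exact hG _ (driftedFraction_mem_Icc hK hy)

end BuyAndHold

open BuyAndHold

theorem buy_and_hold_recursive_bound_general
    {Ω : Type*} [MeasureSpace Ω] [IsProbabilityMeasure (ℙ : Measure Ω)]
    (n : ℕ) (hn : 2 ≤ n) (X : ℕ → Ω → ℝ)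
    (hmeas : ∀ i, Measurable (X i))
    (hindep : iIndepFun (m := fun _ : Fin n => Real.measurableSpace)
      (fun i : Fin n => X i) ℙ)
    (hident : ∀ i < n, IdentDistrib (X i) (X 0) ℙ ℙ)
    (Xmin Xmax : ℝ) (hXmin : -1 < Xmin)
    (hbdd : ∀ i < n, ∀ᵐ ω ∂ℙ, X i ω ∈ Set.Icc Xmin Xmax)
    (K : ℝ) (hK : K ∈ Set.Icc (0:ℝ) 1) :
    (1 / (n : ℝ)) *
        ∫ ω, Real.log (1 + K * (∏ k ∈ Finset.range n, (1 + X k ω) - 1)) ∂ℙ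
      ≤ (((n : ℝ) - 1) / (n : ℝ)) *
          (⨆ K' : Set.Icc (0:ℝ) 1,
            (1 / ((n : ℝ) - 1)) *
              ∫ ω, Real.log
                (1 + (K' : ℝ) * (∏ k ∈ Finset.range (n - 1), (1 + X k ω) - 1)) ∂ℙ)
        + (1 / (n : ℝ)) * ∫ ω, Real.log (1 + K * X 0 ω) ∂ℙ := by
  obtain ⟨m, rfl⟩ : ∃ m, n = m + 1 := ⟨n - 1, by omega⟩
  have hm : (0 : ℝ) < m := by exact_mod_cast (by omega : 0 < m)
  simp only [Nat.cast_add, Nat.cast_one, add_sub_cancel_right, Nat.add_sub_cancel,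
    Finset.prod_range_succ]
  set P : Ω → ℝ := fun ω => ∏ k ∈ Finset.range m, (1 + X k ω)
  have hgross : ∀ᵐ ω ∂ℙ, ∀ k ∈ Finset.range (m + 1), 1 + X k ω ∈ Icc (1 + Xmin) (1 + Xmax) :=
    (Filter.eventually_all_finset _).2 fun k hk => (hbdd k (Finset.mem_range.1 hk)).mono
      fun ω hω => ⟨by linarith [hω.1], by linarith [hω.2]⟩
  have hPbdd : ∀ᵐ ω ∂ℙ, P ω ∈ Icc ((1 + Xmin) ^ m) ((1 + Xmax) ^ m) := hgross.mono fun ω h => by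
    simpa using prod_mem_Icc_pow (Finset.range m) (by linarith) fun k hk =>
      h k (Finset.range_subset_range.2 m.le_succ hk)
  have hPm : Measurable P := by fun_prop
  have hlogP := integrable_log_of_ae_mem_Icc hPm.aemeasurable (pow_pos (by linarith) m) hPbdd
  have hlogY := integrable_log_of_ae_mem_Icc (by fun_prop) (by linarith)
    (hgross.mono fun ω h => h m (by simp))
  have hP0 : ∀ᵐ ω ∂ℙ, 0 < P ω := hPbdd.mono fun ω h => (pow_pos (by linarith) m).trans_le h.1
  have hPY : IndepFun (X m) P ℙ := indepFun_prod_range_one_add hmeas hindep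
  have hG := integral_log_one_add_mul_sub_one_le_mul_iSup hPm.aemeasurable hP0 hlogP hm
  have key := integral_log_one_add_mul_mul_one_add_sub_one_le hPY (hmeas m) hPm
    (hgross.mono fun ω h => by linarith [(h m (by simp)).1]) hP0 hlogY hlogP hK hG
  have hlaw : ∫ ω, log (1 + K * X m ω) ∂ℙ = ∫ ω, log (1 + K * X 0 ω) ∂ℙ :=
    ((hident m (by omega)).comp (u := fun x => log (1 + K * x)) (by fun_prop)).integral_eq
  rw [hlaw] at key
  calc _ ≤ 1 / ((m : ℝ) + 1) * (∫ ω, log (1 + K * X 0 ω) ∂ℙ + m * _) :=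
        mul_le_mul_of_nonneg_left key (by positivity)
    _ = _ := by ring

/-- For i.i.d. returns `X 0, …, X (n-1)` (with `n ≥ 2`) bounded a.s. in
`[Xmin, Xmax]` where `-1 < Xmin < 0 < Xmax`, and every Kelly fraction
`K ∈ [0,1]`, the `n`-period buy-and-hold expected log-growth
`g_n(K) = (1/n) E[log (1 + K 𝒳_n)]` (with `𝒳_m = ∏_{k<m} (1 + X k) - 1`)
satisfies `g_n(K) ≤ ((n-1)/n) g_{n-1}* + (1/n) g_1(K)`, where
`g_{n-1}* = sup_{K' ∈ [0,1]} g_{n-1}(K')` and `g_1(K) = E[log (1 + K X 0)]`. -/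
theorem buy_and_hold_recursive_bound
    {Ω : Type*} [MeasureSpace Ω] [IsProbabilityMeasure (ℙ : Measure Ω)]
    (n : ℕ) (hn : 2 ≤ n) (X : ℕ → Ω → ℝ)
    (hmeas : ∀ i, Measurable (X i))
    (hindep : iIndepFun (m := fun _ : Fin n => Real.measurableSpace)
      (fun i : Fin n => X i) ℙ)
    (hident : ∀ i < n, IdentDistrib (X i) (X 0) ℙ ℙ)
    (Xmin Xmax : ℝ) (hXmin : -1 < Xmin) (hXminNeg : Xmin < 0) (hXmaxPos : 0 < Xmax)
    (hbdd : ∀ i < n, ∀ᵐ ω ∂ℙ, X i ω ∈ Set.Icc Xmin Xmax)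
    (K : ℝ) (hK : K ∈ Set.Icc (0:ℝ) 1) :
    (1 / (n : ℝ)) *
        ∫ ω, Real.log (1 + K * (∏ k ∈ Finset.range n, (1 + X k ω) - 1)) ∂ℙ
      ≤ (((n : ℝ) - 1) / (n : ℝ)) *
          (⨆ K' : Set.Icc (0:ℝ) 1,
            (1 / ((n : ℝ) - 1)) *
              ∫ ω, Real.log
                (1 + (K' : ℝ) * (∏ k ∈ Finset.range (n - 1), (1 + X k ω) - 1)) ∂ℙ)
        + (1 / (n : ℝ)) * ∫ ω, Real.log (1 + K * X 0 ω) ∂ℙ :=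
  buy_and_hold_recursive_bound_general n hn X hmeas hindep hident Xmin Xmax hXmin hbdd K hK
end

section
/- For every m ≥ 2, the optimal expected log-growths satisfy the recursive bound g_m* ≤ ((m−1)/m)·g_{m−1}* + (1/m)·g_1*. -/
open MeasureTheory ProbabilityTheory Real Set

/-!
Split the `m`-period compound return as `(1 + Y) (1 + Z) - 1`, where `Y` is the compound return of
the first `m - 1` periods and `Z` the independent last return. Holding the fraction `K` of wealth
through all `m` periods is holding `K` through the period of `Z` and then the drifted fraction
`K' = K (1 + Z) / (1 + K Z) ∈ [0, 1]` through those of `Y`, so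
`log (1 + K ((1 + Y) (1 + Z) - 1)) = log (1 + K Z) + log (1 + K' Y)`. The first term has expectation
at most `g_1*`. Since `K'` depends only on `Z`, which is independent of `Y`, the expectation of the
second term is an average of log-growths of `Y` at admissible fractions, hence at most
`(m - 1) g_{m-1}*`.
-/

lemma one_add_mul_pos {c y : ℝ} (hc0 : 0 ≤ c) (hc1 : c ≤ 1) (hy : -1 < y) : 0 < 1 + c * y := by
  rcases le_total 0 y with h | h <;> nlinarith

lemma abs_log_one_add_mul_le {c y : ℝ} (hc0 : 0 ≤ c) (hc1 : c ≤ 1) (hy : -1 < y) :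
    |log (1 + c * y)| ≤ |log (1 + y)| := by
  rcases le_total 0 y with h | h
  · have h1 : 1 ≤ 1 + c * y := by nlinarith
    have h2 : 1 + c * y ≤ 1 + y := by nlinarith
    rw [abs_of_nonneg (log_nonneg h1), abs_of_nonneg (log_nonneg (h1.trans h2))]
    exact log_le_log (by linarith) h2
  · have h1 : 1 + c * y ≤ 1 := by nlinarith
    have h2 : 1 + y ≤ 1 + c * y := by nlinarith
    rw [abs_of_nonpos (log_nonpos (by linarith) h1),
      abs_of_nonpos (log_nonpos (by linarith) (h2.trans h1))]
    exact neg_le_neg (log_le_log (by linarith) h2)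

lemma abs_log_one_add_mul_le_max {c y lo hi : ℝ} (hc0 : 0 ≤ c) (hc1 : c ≤ 1) (hlo : -1 < lo)
    (hy : y ∈ Icc lo hi) : |log (1 + c * y)| ≤ max |log (1 + lo)| |log (1 + hi)| :=
  (abs_log_one_add_mul_le hc0 hc1 (hlo.trans_le hy.1)).trans <| abs_le_max_abs_abs
    (log_le_log (by linarith) (by linarith [hy.1]))
    (log_le_log (by linarith [hy.1]) (by linarith [hy.2]))

lemma prod_one_add_mem_Icc {ι : Type*} (s : Finset ι) {x : ι → ℝ} {a b : ℝ} (ha : -1 ≤ a)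
    (hx : ∀ i ∈ s, x i ∈ Icc a b) :
    ∏ i ∈ s, (1 + x i) ∈ Icc ((1 + a) ^ s.card) ((1 + b) ^ s.card) := by
  constructor
  · rw [← Finset.prod_const]
    exact Finset.prod_le_prod (fun _ _ => by linarith) fun i hi => by linarith [(hx i hi).1]
  · rw [← Finset.prod_const]
    exact Finset.prod_le_prod (fun i hi => by linarith [(hx i hi).1]) fun i hi => by
      linarith [(hx i hi).2]

noncomputable def driftedFraction (K z : ℝ) : ℝ := K * (1 + z) / (1 + K * z)

@[fun_prop]
lemma measurable_driftedFraction (K : ℝ) : Measurable (driftedFraction K) := by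
  unfold driftedFraction
  fun_prop

lemma driftedFraction_mem_Icc {K z : ℝ} (hK0 : 0 ≤ K) (hK1 : K ≤ 1) (hz : -1 < z) :
    driftedFraction K z ∈ Icc 0 1 := by
  have hpos := one_add_mul_pos hK0 hK1 hz
  refine ⟨div_nonneg (mul_nonneg hK0 (by linarith)) hpos.le, (div_le_one hpos).2 ?_⟩
  linarith

lemma log_one_add_mul_compound {K y z : ℝ} (hK0 : 0 ≤ K) (hK1 : K ≤ 1) (hy : -1 < y)
    (hz : -1 < z) :
    log (1 + K * ((1 + y) * (1 + z) - 1)) =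
      log (1 + K * z) + log (1 + driftedFraction K z * y) := by
  have hKz := one_add_mul_pos hK0 hK1 hz
  obtain ⟨h0, h1⟩ := driftedFraction_mem_Icc hK0 hK1 hz
  rw [← log_mul hKz.ne' (one_add_mul_pos h0 h1 hy).ne', driftedFraction]
  congr 1
  field_simp
  ring

section Probability

variable {Ω : Type*} [MeasurableSpace Ω] {μ : Measure Ω}

lemma ProbabilityTheory.iIndepFun.indepFun_prod_range_of_lt {β : Type*} [CommMonoid β]
    [MeasurableSpace β] [MeasurableMul₂ β] {n p : ℕ} {f : ℕ → Ω → β}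
    (hf : iIndepFun (fun i : Fin n => f i) μ) (hmeas : ∀ i, Measurable (f i)) (hp : p < n) :
    IndepFun (∏ k ∈ Finset.range p, f k) (f p) μ := by
  have hs : (Finset.univ.filter fun j : Fin n => (j : ℕ) < p).map Fin.valEmbedding =
      Finset.range p := by
    ext k
    simp only [Finset.mem_map, Finset.mem_filter, Finset.mem_univ, true_and,
      Fin.valEmbedding_apply, Finset.mem_range]
    exact ⟨fun ⟨j, hj, hjk⟩ => hjk ▸ hj, fun hk => ⟨⟨k, by omega⟩, hk, rfl⟩⟩
  rw [← hs, Finset.prod_map]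
  exact hf.indepFun_finsetProd_of_notMem (fun i => hmeas i) (i := ⟨p, hp⟩) (by simp)

lemma ProbabilityTheory.IndepFun.integral_comp_le_of_ae_le [IsProbabilityMeasure μ]
    {α β : Type*} [MeasurableSpace α] [MeasurableSpace β] {B : Ω → β} {A : Ω → α}
    (hB : Measurable B) (hA : Measurable A) (hind : IndepFun B A μ) {f : β × α → ℝ}
    (hf : Measurable f)
    (hfi : Integrable (fun ω => f (B ω, A ω)) μ) {S : ℝ}
    (hS : ∀ᵐ x ∂μ.map B, ∫ ω, f (x, A ω) ∂μ ≤ S) :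
    ∫ ω, f (B ω, A ω) ∂μ ≤ S := by
  have hpair : AEMeasurable (fun ω => (B ω, A ω)) μ := (hB.prodMk hA).aemeasurable
  have hmap : μ.map (fun ω => (B ω, A ω)) = (μ.map B).prod (μ.map A) :=
    (indepFun_iff_map_prod_eq_prod_map_map hB.aemeasurable hA.aemeasurable).1 hind
  have hfi' : Integrable f ((μ.map B).prod (μ.map A)) := by
    rw [← hmap]
    exact (integrable_map_measure hf.aestronglyMeasurable hpair).2 hfi
  have := Measure.isProbabilityMeasure_map (μ := μ) hB.aemeasurable
  calc ∫ ω, f (B ω, A ω) ∂μ = ∫ x, ∫ a, f (x, a) ∂μ.map A ∂μ.map B := by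
        rw [← integral_prod f hfi', ← hmap, integral_map hpair hf.aestronglyMeasurable]
    _ ≤ ∫ _, S ∂μ.map B := integral_mono_ae hfi'.integral_prod_left (integrable_const S) <| by
        filter_upwards [hS] with x hx
        rwa [integral_map (f := fun a => f (x, a)) hA.aemeasurable
          (hf.comp measurable_prodMk_left).aestronglyMeasurable]
    _ = S := by simp

variable {Y : Ω → ℝ} {lo hi : ℝ}

lemma integrable_log_one_add_mul [IsFiniteMeasure μ] {c : Ω → ℝ} (hc : Measurable c)
    (hY : Measurable Y) (hc01 : ∀ᵐ ω ∂μ, c ω ∈ Icc 0 1) (hlo : -1 < lo)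
    (hYb : ∀ᵐ ω ∂μ, Y ω ∈ Icc lo hi) :
    Integrable (fun ω => log (1 + c ω * Y ω)) μ :=
  Integrable.of_bound (by fun_prop : Measurable _).aestronglyMeasurable
    (max |log (1 + lo)| |log (1 + hi)|) <| by
    filter_upwards [hc01, hYb] with ω hc hy
    exact abs_log_one_add_mul_le_max hc.1 hc.2 hlo hy

lemma bddAbove_integral_log_one_add_mul [IsProbabilityMeasure μ] (hlo : -1 < lo)
    (hYb : ∀ᵐ ω ∂μ, Y ω ∈ Icc lo hi) :
    BddAbove (range fun c : Icc (0 : ℝ) 1 => ∫ ω, log (1 + c * Y ω) ∂μ) := by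
  refine ⟨max |log (1 + lo)| |log (1 + hi)|, ?_⟩
  rintro _ ⟨c, rfl⟩
  refine (le_abs_self _).trans ?_
  simpa using norm_integral_le_of_norm_le_const
    (hYb.mono fun ω hy =>
      (norm_eq_abs _).trans_le (abs_log_one_add_mul_le_max c.2.1 c.2.2 hlo hy))

lemma integral_log_one_add_mul_compound_le [IsProbabilityMeasure μ] {Z : Ω → ℝ} {lo' hi' K : ℝ}
    (hY : Measurable Y) (hZ : Measurable Z) (hind : IndepFun Z Y μ) (hlo : -1 < lo)
    (hYb : ∀ᵐ ω ∂μ, Y ω ∈ Icc lo hi) (hlo' : -1 < lo') (hZb : ∀ᵐ ω ∂μ, Z ω ∈ Icc lo' hi')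
    (hK0 : 0 ≤ K) (hK1 : K ≤ 1) :
    ∫ ω, log (1 + K * ((1 + Y ω) * (1 + Z ω) - 1)) ∂μ
      ≤ ∫ ω, log (1 + K * Z ω) ∂μ + ⨆ c : Icc (0 : ℝ) 1, ∫ ω, log (1 + c * Y ω) ∂μ := by
  have hZ' : ∀ᵐ ω ∂μ, -1 < Z ω := hZb.mono fun ω h => hlo'.trans_le h.1
  have hsplit : ∀ᵐ ω ∂μ, log (1 + K * ((1 + Y ω) * (1 + Z ω) - 1)) =
      log (1 + K * Z ω) + log (1 + driftedFraction K (Z ω) * Y ω) := by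
    filter_upwards [hYb, hZ'] with ω hy hz
    exact log_one_add_mul_compound hK0 hK1 (hlo.trans_le hy.1) hz
  have hint := integrable_log_one_add_mul (by fun_prop) hY
    (hZ'.mono fun ω hz => driftedFraction_mem_Icc hK0 hK1 hz) hlo hYb
  rw [integral_congr_ae hsplit, integral_add (integrable_log_one_add_mul measurable_const hZ
    (ae_of_all _ fun _ => ⟨hK0, hK1⟩) hlo' hZb) hint]
  gcongr
  refine hind.integral_comp_le_of_ae_le hZ hY
    (f := fun q => log (1 + driftedFraction K q.1 * q.2)) (by fun_prop)
    hint ?_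
  filter_upwards [(ae_map_iff hZ.aemeasurable measurableSet_Ioi).2 hZ'] with z hz
  exact le_ciSup (bddAbove_integral_log_one_add_mul hlo hYb)
    ⟨driftedFraction K z, driftedFraction_mem_Icc hK0 hK1 hz⟩

variable {n p : ℕ} {X : ℕ → Ω → ℝ} {Xmin Xmax : ℝ}

lemma ae_prod_one_add_sub_one_mem_Icc (hXmin : -1 ≤ Xmin)
    (hbdd : ∀ i < n, ∀ᵐ ω ∂μ, X i ω ∈ Icc Xmin Xmax) (hp : p ≤ n) :
    ∀ᵐ ω ∂μ, ∏ k ∈ Finset.range p, (1 + X k ω) - 1 ∈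
      Icc ((1 + Xmin) ^ p - 1) ((1 + Xmax) ^ p - 1) := by
  have := (Filter.eventually_all_finset (Finset.range p)).2 fun k hk =>
    hbdd k (by simp only [Finset.mem_range] at hk; omega)
  filter_upwards [this] with ω hω
  simpa using prod_one_add_mem_Icc (Finset.range p) hXmin hω

lemma ProbabilityTheory.iIndepFun.indepFun_prod_one_add_sub_one
    (hindep : iIndepFun (fun i : Fin n => X i) μ) (hmeas : ∀ i, Measurable (X i)) (hp : p < n) :
    IndepFun (X p) (fun ω => ∏ k ∈ Finset.range p, (1 + X k ω) - 1) μ := by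
  have h := iIndepFun.indepFun_prod_range_of_lt (f := fun k ω => 1 + X k ω)
    (hindep.comp (fun _ x => 1 + x) fun _ => by fun_prop) (fun k => by fun_prop) hp
  convert (h.comp (φ := fun x => x - 1) (ψ := fun x => x - 1) (by fun_prop) (by fun_prop)).symm
    using 1 <;> funext ω <;> simp [Finset.prod_apply]

lemma integral_log_one_add_mul_prod_succ_le [IsProbabilityMeasure μ]
    (hmeas : ∀ i, Measurable (X i)) (hindep : iIndepFun (fun i : Fin n => X i) μ)
    (hident : ∀ i < n, IdentDistrib (X i) (X 0) μ μ) (hXmin : -1 < Xmin)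
    (hbdd : ∀ i < n, ∀ᵐ ω ∂μ, X i ω ∈ Icc Xmin Xmax) (hp : p < n) (K : Icc (0 : ℝ) 1) :
    ∫ ω, log (1 + K * (∏ k ∈ Finset.range (p + 1), (1 + X k ω) - 1)) ∂μ
      ≤ (⨆ c : Icc (0 : ℝ) 1, ∫ ω, log (1 + c * X 0 ω) ∂μ)
        + ⨆ c : Icc (0 : ℝ) 1, ∫ ω, log (1 + c * (∏ k ∈ Finset.range p, (1 + X k ω) - 1)) ∂μ := by
  have hlaw : ∫ ω, log (1 + K * X p ω) ∂μ = ∫ ω, log (1 + K * X 0 ω) ∂μ :=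
    ((hident p hp).comp (by fun_prop : Measurable fun x => log (1 + K * x))).integral_eq
  have hsplit := integral_log_one_add_mul_compound_le (by fun_prop) (hmeas p)
    (hindep.indepFun_prod_one_add_sub_one hmeas hp)
    (by simpa using pow_pos (by linarith : (0 : ℝ) < 1 + Xmin) p)
    (ae_prod_one_add_sub_one_mem_Icc hXmin.le hbdd hp.le) hXmin (hbdd p hp) K.2.1 K.2.2
  have hcompound (ω : Ω) : ∏ k ∈ Finset.range (p + 1), (1 + X k ω) - 1 =
      (1 + (∏ k ∈ Finset.range p, (1 + X k ω) - 1)) * (1 + X p ω) - 1 := by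
    simp [Finset.prod_range_succ]
  simp only [hcompound]
  rw [hlaw] at hsplit
  linarith [le_ciSup (bddAbove_integral_log_one_add_mul hXmin (hbdd 0 (by omega))) K]

end Probability

theorem optimal_growth_recursive_bound_general
    {Ω : Type*} [MeasureSpace Ω] [IsProbabilityMeasure (ℙ : Measure Ω)]
    (n : ℕ) (X : ℕ → Ω → ℝ)
    (hmeas : ∀ i, Measurable (X i))
    (hindep : iIndepFun
      (fun i : Fin n => X i) ℙ)
    (hident : ∀ i < n, IdentDistrib (X i) (X 0) ℙ ℙ)
    (Xmin Xmax : ℝ) (hXmin : -1 < Xmin)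
    (hbdd : ∀ i < n, ∀ᵐ ω ∂ℙ, X i ω ∈ Set.Icc Xmin Xmax)
    (m : ℕ) (hm : 2 ≤ m) (hmn : m ≤ n) :
    (⨆ K : Set.Icc (0:ℝ) 1,
        (1 / (m : ℝ)) *
          ∫ ω, Real.log (1 + (K : ℝ) * (∏ k ∈ Finset.range m, (1 + X k ω) - 1)) ∂ℙ)
      ≤ (((m : ℝ) - 1) / (m : ℝ)) *
          (⨆ K : Set.Icc (0:ℝ) 1,
            (1 / ((m : ℝ) - 1)) *
              ∫ ω, Real.log
                (1 + (K : ℝ) * (∏ k ∈ Finset.range (m - 1), (1 + X k ω) - 1)) ∂ℙ)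
        + (1 / (m : ℝ)) *
            (⨆ K : Set.Icc (0:ℝ) 1, ∫ ω, Real.log (1 + (K : ℝ) * X 0 ω) ∂ℙ) := by
  obtain ⟨p, rfl⟩ : ∃ p, m = p + 1 := ⟨m - 1, by omega⟩
  have hp : (0 : ℝ) < p := by exact_mod_cast (by omega : 0 < p)
  set S1 := ⨆ K : Icc (0 : ℝ) 1, ∫ ω, log (1 + K * X 0 ω) ∂ℙ
  set Sp := ⨆ K : Icc (0 : ℝ) 1, ∫ ω, log (1 + K * (∏ k ∈ Finset.range p, (1 + X k ω) - 1)) ∂ℙ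
  rw [Nat.add_sub_cancel, Nat.cast_add_one, add_sub_cancel_right,
    ← mul_iSup_of_nonneg (by positivity), ← mul_iSup_of_nonneg (by positivity)]
  calc 1 / ((p : ℝ) + 1) * ⨆ K : Icc (0 : ℝ) 1,
        ∫ ω, log (1 + K * (∏ k ∈ Finset.range (p + 1), (1 + X k ω) - 1)) ∂ℙ
      ≤ 1 / ((p : ℝ) + 1) * (S1 + Sp) := by
        gcongr
        exact ciSup_le
          (integral_log_one_add_mul_prod_succ_le hmeas hindep hident hXmin hbdd (by omega))
    _ = p / ((p : ℝ) + 1) * (1 / p * Sp) + 1 / ((p : ℝ) + 1) * S1 := by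
        field_simp
        ring

/-- For i.i.d. returns `X 0, …, X (n-1)` bounded a.s. in `[Xmin, Xmax]` where
`-1 < Xmin < 0 < Xmax`, and every `m` with `2 ≤ m ≤ n`, the optimal expected
log-growths `g_m* = sup_{K ∈ [0,1]} (1/m) E[log (1 + K 𝒳_m)]` (with compound
return `𝒳_m = ∏_{k<m} (1 + X k) - 1`) satisfy the recursive bound
`g_m* ≤ ((m-1)/m) g_{m-1}* + (1/m) g_1*`, where
`g_1* = sup_{K ∈ [0,1]} E[log (1 + K X 0)]`. -/
theorem optimal_growth_recursive_bound
    {Ω : Type*} [MeasureSpace Ω] [IsProbabilityMeasure (ℙ : Measure Ω)]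
    (n : ℕ) (hn : 1 ≤ n) (X : ℕ → Ω → ℝ)
    (hmeas : ∀ i, Measurable (X i))
    (hindep : iIndepFun
      (fun i : Fin n => X i) ℙ)
    (hident : ∀ i < n, IdentDistrib (X i) (X 0) ℙ ℙ)
    (Xmin Xmax : ℝ) (hXmin : -1 < Xmin) (hXminNeg : Xmin < 0) (hXmaxPos : 0 < Xmax)
    (hbdd : ∀ i < n, ∀ᵐ ω ∂ℙ, X i ω ∈ Set.Icc Xmin Xmax)
    (m : ℕ) (hm : 2 ≤ m) (hmn : m ≤ n) :
    (⨆ K : Set.Icc (0:ℝ) 1,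
        (1 / (m : ℝ)) *
          ∫ ω, Real.log (1 + (K : ℝ) * (∏ k ∈ Finset.range m, (1 + X k ω) - 1)) ∂ℙ)
      ≤ (((m : ℝ) - 1) / (m : ℝ)) *
          (⨆ K : Set.Icc (0:ℝ) 1,
            (1 / ((m : ℝ) - 1)) *
              ∫ ω, Real.log
                (1 + (K : ℝ) * (∏ k ∈ Finset.range (m - 1), (1 + X k ω) - 1)) ∂ℙ)
        + (1 / (m : ℝ)) *
            (⨆ K : Set.Icc (0:ℝ) 1, ∫ ω, Real.log (1 + (K : ℝ) * X 0 ω) ∂ℙ) :=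
  optimal_growth_recursive_bound_general n X hmeas hindep hident Xmin Xmax hXmin hbdd m hm hmn
end

section
/- Sufficient attractiveness result: if in addition E[1/(1 + X(0))] ≤ 1, then the buy-and-holder matches the high-frequency trader, i.e., g_n* = g_1*. -/
/-! For a wealth factor `Y > 0` with `E[Y⁻¹] ≤ 1`, the inequality `log x ≤ x - 1` at
`x = (1 + K (Y - 1)) / Y` gives
`E[log (1 + K (Y - 1))] ≤ E[log Y] + (1 - K) (E[Y⁻¹] - 1) ≤ E[log Y]`,
so full investment `K = 1` is optimal. By independence
`E[(∏ (1 + X k))⁻¹] = E[(1 + X 0)⁻¹] ^ n ≤ 1`, so this applies to both traders, and at `K = 1`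
the buy-and-holder's growth is `(1/n) E[log ∏ (1 + X k)] = E[log (1 + X 0)]`. -/

open MeasureTheory ProbabilityTheory Real Finset Set

lemma Real.log_one_add_mul_sub_one_le {y K : ℝ} (hy : 0 < y) (hK : 0 < 1 + K * (y - 1)) :
    log (1 + K * (y - 1)) ≤ log y + (1 - K) * (y⁻¹ - 1) := by
  have h := log_le_sub_one_of_pos (div_pos hK hy)
  rw [log_div hK.ne' hy.ne'] at h
  have : (1 + K * (y - 1)) / y - 1 = (1 - K) * (y⁻¹ - 1) := by field_simp; ring
  linarith

lemma one_add_mul_sub_one_mem_Icc {y a b K : ℝ} (hy : y ∈ Icc a b) (hK : K ∈ Icc (0 : ℝ) 1) :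
    1 + K * (y - 1) ∈ Icc (min 1 a) (max 1 b) := by
  obtain ⟨hK0, hK1⟩ := hK
  have := min_le_left 1 a; have := min_le_right 1 a
  have := le_max_left 1 b; have := le_max_right 1 b
  constructor <;> nlinarith [hy.1, hy.2]

section

variable {Ω : Type*} [MeasurableSpace Ω] {μ : Measure Ω} {Y : Ω → ℝ} {a b : ℝ}

lemma integrable_log_of_ae_mem_Icc [IsFiniteMeasure μ] (hY : AEMeasurable Y μ) (ha : 0 < a)
    (hab : ∀ᵐ ω ∂μ, Y ω ∈ Icc a b) : Integrable (fun ω ↦ log (Y ω)) μ := by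
  refine .of_bound (measurable_log.comp_aemeasurable hY).aestronglyMeasurable
    (max (-log a) (log b)) ?_
  filter_upwards [hab] with ω ⟨hal, hbl⟩
  rw [norm_eq_abs, abs_le]
  constructor
  · linarith [log_le_log ha hal, le_max_left (-log a) (log b)]
  · linarith [log_le_log (ha.trans_le hal) hbl, le_max_right (-log a) (log b)]

lemma integrable_inv_of_ae_mem_Icc [IsFiniteMeasure μ] (hY : AEMeasurable Y μ) (ha : 0 < a)
    (hab : ∀ᵐ ω ∂μ, Y ω ∈ Icc a b) : Integrable (fun ω ↦ (Y ω)⁻¹) μ := by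
  refine .of_bound hY.inv.aestronglyMeasurable a⁻¹ ?_
  filter_upwards [hab] with ω hω
  rw [norm_eq_abs, abs_of_pos (inv_pos.2 (ha.trans_le hω.1))]
  exact inv_anti₀ ha hω.1

lemma integral_log_one_add_mul_sub_one_le [IsProbabilityMeasure μ] (hY : AEMeasurable Y μ)
    (ha : 0 < a) (hab : ∀ᵐ ω ∂μ, Y ω ∈ Icc a b) (hinv : ∫ ω, (Y ω)⁻¹ ∂μ ≤ 1)
    {K : ℝ} (hK : K ∈ Icc (0 : ℝ) 1) :
    ∫ ω, log (1 + K * (Y ω - 1)) ∂μ ≤ ∫ ω, log (Y ω) ∂μ := by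
  have hlog := integrable_log_of_ae_mem_Icc hY ha hab
  have hinvY := integrable_inv_of_ae_mem_Icc hY ha hab
  have hlogK : Integrable (fun ω ↦ log (1 + K * (Y ω - 1))) μ :=
    integrable_log_of_ae_mem_Icc (by fun_prop) (lt_min one_pos ha)
      (hab.mono fun ω hω ↦ one_add_mul_sub_one_mem_Icc hω hK)
  have hcorr : Integrable (fun ω ↦ (1 - K) * ((Y ω)⁻¹ - 1)) μ :=
    (hinvY.sub (integrable_const 1)).const_mul _
  calc ∫ ω, log (1 + K * (Y ω - 1)) ∂μ
      ≤ ∫ ω, (log (Y ω) + (1 - K) * ((Y ω)⁻¹ - 1)) ∂μ := by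
        refine integral_mono_ae hlogK (hlog.add hcorr) ?_
        filter_upwards [hab] with ω hω
        exact log_one_add_mul_sub_one_le (ha.trans_le hω.1)
          (lt_min one_pos ha |>.trans_le (one_add_mul_sub_one_mem_Icc hω hK).1)
    _ = ∫ ω, log (Y ω) ∂μ + (1 - K) * (∫ ω, (Y ω)⁻¹ ∂μ - 1) := by
        rw [integral_add hlog hcorr, integral_const_mul, integral_sub hinvY (integrable_const 1),
          integral_const, probReal_univ, one_smul]
    _ ≤ ∫ ω, log (Y ω) ∂μ := by nlinarith [hK.2]

lemma iSup_integral_log_one_add_mul_sub_one [IsProbabilityMeasure μ] (hY : AEMeasurable Y μ)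
    (ha : 0 < a) (hab : ∀ᵐ ω ∂μ, Y ω ∈ Icc a b) (hinv : ∫ ω, (Y ω)⁻¹ ∂μ ≤ 1) :
    ⨆ K : Icc (0 : ℝ) 1, ∫ ω, log (1 + K * (Y ω - 1)) ∂μ = ∫ ω, log (Y ω) ∂μ := by
  have : Nonempty (Icc (0 : ℝ) 1) := ⟨⟨1, right_mem_Icc.2 zero_le_one⟩⟩
  refine ciSup_eq_of_forall_le_of_forall_lt_exists_gt
    (fun K ↦ integral_log_one_add_mul_sub_one_le hY ha hab hinv K.2) fun w hw ↦ ?_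
  exact ⟨⟨1, right_mem_Icc.2 zero_le_one⟩, by simpa only [one_mul, add_sub_cancel] using hw⟩

lemma ae_prod_mem_Icc_pow {ι : Type*} {s : Finset ι} {f : ι → Ω → ℝ} (ha : 0 ≤ a)
    (h : ∀ i ∈ s, ∀ᵐ ω ∂μ, f i ω ∈ Icc a b) :
    ∀ᵐ ω ∂μ, ∏ i ∈ s, f i ω ∈ Icc (a ^ s.card) (b ^ s.card) := by
  filter_upwards [(Filter.eventually_all_finset s).2 h] with ω hω
  constructor
  · rw [← prod_const]
    exact prod_le_prod (fun _ _ ↦ ha) fun i hi ↦ (hω i hi).1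
  · rw [← prod_const]
    exact prod_le_prod (fun i hi ↦ ha.trans (hω i hi).1) fun i hi ↦ (hω i hi).2

end

section

variable {Ω : Type*} [MeasurableSpace Ω] {μ : Measure Ω} {X : ℕ → Ω → ℝ} {n : ℕ}

lemma integral_prod_range_comp_eq_pow (hindep : iIndepFun (fun i : Fin n ↦ X i) μ)
    (hident : ∀ i < n, IdentDistrib (X i) (X 0) μ μ) {f : ℝ → ℝ} (hf : Measurable f) :
    ∫ ω, ∏ k ∈ range n, f (X k ω) ∂μ = (∫ ω, f (X 0 ω) ∂μ) ^ n := by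
  simp_rw [← Fin.prod_univ_eq_prod_range fun k ↦ f (X k _)]
  rw [hindep.integral_fun_prod_comp (f := fun _ ↦ f) (fun i ↦ (hident i i.2).aemeasurable_fst)
    fun _ ↦ hf.aestronglyMeasurable]
  have h : ∀ i < n, ∫ ω, f (X i ω) ∂μ = ∫ ω, f (X 0 ω) ∂μ :=
    fun i hi ↦ ((hident i hi).comp hf).integral_eq
  simp [h _ (Fin.is_lt _)]

lemma integral_sum_range_comp_eq_mul (hident : ∀ i < n, IdentDistrib (X i) (X 0) μ μ)
    {f : ℝ → ℝ} (hf : Measurable f) (hint : ∀ i < n, Integrable (fun ω ↦ f (X i ω)) μ) :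
    ∫ ω, ∑ k ∈ range n, f (X k ω) ∂μ = n * ∫ ω, f (X 0 ω) ∂μ := by
  have h : ∀ i < n, ∫ ω, f (X i ω) ∂μ = ∫ ω, f (X 0 ω) ∂μ :=
    fun i hi ↦ ((hident i hi).comp hf).integral_eq
  rw [integral_finsetSum _ fun i hi ↦ hint i (mem_range.1 hi),
    sum_congr rfl fun i hi ↦ h i (mem_range.1 hi)]
  simp

end

theorem sufficiently_attractive_buy_and_hold_matches_general
    {Ω : Type*} [MeasureSpace Ω] [IsProbabilityMeasure (ℙ : Measure Ω)]
    (n : ℕ) (hn : 1 ≤ n) (X : ℕ → Ω → ℝ)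
    (hindep : iIndepFun (m := fun _ : Fin n => Real.measurableSpace)
      (fun i : Fin n => X i) ℙ)
    (hident : ∀ i < n, IdentDistrib (X i) (X 0) ℙ ℙ)
    (Xmin Xmax : ℝ) (hXmin : -1 < Xmin)
    (hbdd : ∀ i < n, ∀ᵐ ω ∂ℙ, X i ω ∈ Set.Icc Xmin Xmax)
    (hattr : (∫ ω, 1 / (1 + X 0 ω) ∂ℙ) ≤ 1) :
    (⨆ K : Set.Icc (0:ℝ) 1,
        (1 / (n : ℝ)) *
          ∫ ω, Real.log (1 + (K : ℝ) * (∏ k ∈ Finset.range n, (1 + X k ω) - 1)) ∂ℙ)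
      = ⨆ K : Set.Icc (0:ℝ) 1, ∫ ω, Real.log (1 + (K : ℝ) * X 0 ω) ∂ℙ := by
  have hpos : 0 < 1 + Xmin := by linarith
  have hmeas : ∀ i < n, AEMeasurable (fun ω ↦ 1 + X i ω) ℙ :=
    fun i hi ↦ (hident i hi).aemeasurable_fst.const_add 1
  have hfactor : ∀ i < n, ∀ᵐ ω ∂ℙ, 1 + X i ω ∈ Icc (1 + Xmin) (1 + Xmax) := fun i hi ↦
    (hbdd i hi).mono fun ω hω ↦ ⟨by linarith [hω.1], by linarith [hω.2]⟩
  have hwealth :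
      ∀ᵐ ω ∂ℙ, ∏ k ∈ range n, (1 + X k ω) ∈ Icc ((1 + Xmin) ^ n) ((1 + Xmax) ^ n) := by
    simpa only [card_range] using
      ae_prod_mem_Icc_pow hpos.le fun i hi ↦ hfactor i (mem_range.1 hi)
  have hinv₁ : ∫ ω, (1 + X 0 ω)⁻¹ ∂ℙ ≤ 1 := by simpa only [one_div] using hattr
  have hinv : ∫ ω, (∏ k ∈ range n, (1 + X k ω))⁻¹ ∂ℙ ≤ 1 := by
    simp_rw [← prod_inv_distrib]
    rw [integral_prod_range_comp_eq_pow hindep hident (f := fun x ↦ (1 + x)⁻¹) (by fun_prop)]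
    refine pow_le_one₀ (integral_nonneg_of_ae ?_) hinv₁
    filter_upwards [hfactor 0 hn] with ω hω using (inv_pos.2 (hpos.trans_le hω.1)).le
  have hlog : ∫ ω, log (∏ k ∈ range n, (1 + X k ω)) ∂ℙ = n * ∫ ω, log (1 + X 0 ω) ∂ℙ := by
    rw [← integral_sum_range_comp_eq_mul hident (f := fun x ↦ log (1 + x)) (by fun_prop)
      fun i hi ↦ integrable_log_of_ae_mem_Icc (hmeas i hi) hpos (hfactor i hi)]
    refine integral_congr_ae ?_
    filter_upwards [(Filter.eventually_all_finset _).2 fun i hi ↦ hfactor i (mem_range.1 hi)]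
      with ω hω using log_prod fun i hi ↦ (hpos.trans_le (hω i hi).1).ne'
  rw [← Real.mul_iSup_of_nonneg (by positivity),
    iSup_integral_log_one_add_mul_sub_one
      (aemeasurable_fun_prod _ fun i hi ↦ hmeas i (mem_range.1 hi)) (pow_pos hpos n) hwealth hinv,
    hlog, one_div, inv_mul_cancel_left₀ (by positivity)]
  simpa only [add_sub_cancel_left] using
    (iSup_integral_log_one_add_mul_sub_one (hmeas 0 hn) hpos (hfactor 0 hn) hinv₁).symm

/-- **Sufficient attractiveness.** For i.i.d. returns `X 0, …, X (n-1)` bounded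
a.s. in `[Xmin, Xmax]` where `-1 < Xmin < 0 < Xmax`, if in addition the stock
is sufficiently attractive, i.e. `E[1/(1 + X 0)] ≤ 1`, then the buy-and-holder
matches the high-frequency trader:
`g_n* = sup_{K ∈ [0,1]} (1/n) E[log (1 + K 𝒳_n)]` equals
`g_1* = sup_{K ∈ [0,1]} E[log (1 + K X 0)]`, where
`𝒳_n = ∏_{k<n} (1 + X k) - 1` is the compound return. -/
theorem sufficiently_attractive_buy_and_hold_matches
    {Ω : Type*} [MeasureSpace Ω] [IsProbabilityMeasure (ℙ : Measure Ω)]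
    (n : ℕ) (hn : 1 ≤ n) (X : ℕ → Ω → ℝ)
    (hmeas : ∀ i, Measurable (X i))
    (hindep : iIndepFun (m := fun _ : Fin n => Real.measurableSpace)
      (fun i : Fin n => X i) ℙ)
    (hident : ∀ i < n, IdentDistrib (X i) (X 0) ℙ ℙ)
    (Xmin Xmax : ℝ) (hXmin : -1 < Xmin) (hXminNeg : Xmin < 0) (hXmaxPos : 0 < Xmax)
    (hbdd : ∀ i < n, ∀ᵐ ω ∂ℙ, X i ω ∈ Set.Icc Xmin Xmax)
    (hattr : (∫ ω, 1 / (1 + X 0 ω) ∂ℙ) ≤ 1) :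
    (⨆ K : Set.Icc (0:ℝ) 1,
        (1 / (n : ℝ)) *
          ∫ ω, Real.log (1 + (K : ℝ) * (∏ k ∈ Finset.range n, (1 + X k ω) - 1)) ∂ℙ)
      = ⨆ K : Set.Icc (0:ℝ) 1, ∫ ω, Real.log (1 + (K : ℝ) * X 0 ω) ∂ℙ :=
  sufficiently_attractive_buy_and_hold_matches_general n hn X hindep hident Xmin Xmax hXmin hbdd
    hattr
end

section
/- Self-Financing Lemma: let K ≥ 0. The one-step-delayed high-frequency trader is long-only and self-financed for every admissible return sequence — i.e., for every sequence X(k) ∈ [X_min, X_max] (k ≥ 0) one has 0 ≤ I(k) ≤ V(k) for all k ≥ 1 — if and only if 0 ≤ K ≤ 1/(1 + X_max). Furthermore, when 0 ≤ K ≤ 1/(1 + X_max), the account value satisfies V(k) ≥ 0 for all k ≥ 0 and every admissible return sequence. -/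
/-- Account value of the one-step-delayed high-frequency trader with Kelly
fraction `K`, initial value `v` and return sequence `X`:
`V 0 = V 1 = v` and `V (k+1) = V k + I k * X k` for `k ≥ 1`, where
`I k = K * (1 + X (k-1)) * V (k-1)` is the investment executed at stage `k`. -/
def delayedAcct (K v : ℝ) (X : ℕ → ℝ) : ℕ → ℝ
  | 0 => v
  | 1 => v
  | (k + 2) => delayedAcct K v X (k + 1)
      + (K * (1 + X k) * delayedAcct K v X k) * X (k + 1)

/-- Investment executed at stage `k ≥ 1` by the one-step-delayed
high-frequency trader: `I k = K * (1 + X (k-1)) * V (k-1)`. -/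
def delayedInv (K v : ℝ) (X : ℕ → ℝ) (k : ℕ) : ℝ :=
  K * (1 + X (k - 1)) * delayedAcct K v X (k - 1)

/-! When `K (1 + X k) ≤ 1` for all `k`, induction gives `0 ≤ V k` and `I (k+1) ≤ V (k+1)`
simultaneously: the next value `V (k+2) = V (k+1) + I (k+1) X (k+1)` is at least `V (k+1)` after
a gain and at least `(1 + X (k+1)) V (k+1)` after a loss (because `I (k+1) ≤ V (k+1)`), and either
bound dominates the next investment `K (1 + X (k+1)) V (k+1)`. Conversely, the constant return
`Xmax` forces `K (1 + Xmax) v ≤ v` already at stage `1`. -/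

theorem kelly_mul_le_add_mul {K x V I : ℝ} (hK1 : K ≤ 1) (hx : -1 ≤ x) (hKx : K * (1 + x) ≤ 1)
    (hV : 0 ≤ V) (hI : 0 ≤ I) (hIV : I ≤ V) : K * (1 + x) * V ≤ V + I * x := by
  rcases le_or_gt 0 x with hx0 | hx0
  · calc K * (1 + x) * V ≤ 1 * V := by gcongr
      _ ≤ V + I * x := by nlinarith
  · calc K * (1 + x) * V ≤ 1 * ((1 + x) * V) := by
          rw [mul_assoc]; gcongr; nlinarith
      _ ≤ V + I * x := by nlinarith

section DelayedTrader

variable {K v : ℝ} {X : ℕ → ℝ}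

theorem delayedInv_succ (k : ℕ) :
    delayedInv K v X (k + 1) = K * (1 + X k) * delayedAcct K v X k := rfl

theorem delayedAcct_add_two (k : ℕ) :
    delayedAcct K v X (k + 2) = delayedAcct K v X (k + 1) + delayedInv K v X (k + 1) * X (k + 1) :=
  rfl

theorem delayedInv_succ_nonneg {k : ℕ} (hK : 0 ≤ K) (hXk : -1 ≤ X k)
    (hV : 0 ≤ delayedAcct K v X k) : 0 ≤ delayedInv K v X (k + 1) := by
  rw [delayedInv_succ]
  exact mul_nonneg (mul_nonneg hK (by linarith)) hV

variable (hK : 0 ≤ K) (hK1 : K ≤ 1) (hX : ∀ k, -1 ≤ X k) (hKX : ∀ k, K * (1 + X k) ≤ 1)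
  (hv : 0 ≤ v)
include hK hK1 hX hKX hv

theorem delayedAcct_nonneg_and_delayedInv_succ_le (k : ℕ) :
    0 ≤ delayedAcct K v X k ∧ delayedInv K v X (k + 1) ≤ delayedAcct K v X (k + 1) := by
  induction k with
  | zero =>
    exact ⟨hv, mul_le_of_le_one_left hv (hKX 0)⟩
  | succ n ih =>
    obtain ⟨hVn, hIV⟩ := ih
    have hI := delayedInv_succ_nonneg hK (hX n) hVn
    refine ⟨hI.trans hIV, ?_⟩
    rw [delayedInv_succ, delayedAcct_add_two]
    exact kelly_mul_le_add_mul hK1 (hX _) (hKX _) (hI.trans hIV) hI hIV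

theorem delayedAcct_nonneg (k : ℕ) : 0 ≤ delayedAcct K v X k :=
  (delayedAcct_nonneg_and_delayedInv_succ_le hK hK1 hX hKX hv k).1

theorem delayedInv_nonneg_and_le_delayedAcct {k : ℕ} (hk : 1 ≤ k) :
    0 ≤ delayedInv K v X k ∧ delayedInv K v X k ≤ delayedAcct K v X k := by
  obtain ⟨n, rfl⟩ := Nat.exists_eq_add_of_le' hk
  exact ⟨delayedInv_succ_nonneg hK (hX n) (delayedAcct_nonneg hK hK1 hX hKX hv n),
    (delayedAcct_nonneg_and_delayedInv_succ_le hK hK1 hX hKX hv n).2⟩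

end DelayedTrader

/-- **Self-Financing Lemma.** Let `-1 < Xmin < 0 < Xmax`, `v > 0` and `K ≥ 0`.
The one-step-delayed high-frequency trader is long-only and self-financed for
every admissible return sequence — i.e. for every sequence with
`X k ∈ [Xmin, Xmax]` one has `0 ≤ I k ≤ V k` for all `k ≥ 1` — if and only if
`K ≤ 1/(1 + Xmax)`.  Furthermore, when `0 ≤ K ≤ 1/(1 + Xmax)`, the account
value satisfies `V k ≥ 0` for all `k ≥ 0` and every admissible return
sequence. -/
theorem self_financing_lemma
    (Xmin Xmax : ℝ) (hXmin : -1 < Xmin) (hXminNeg : Xmin < 0) (hXmaxPos : 0 < Xmax)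
    (v : ℝ) (hv : 0 < v) (K : ℝ) (hK : 0 ≤ K) :
    ((∀ X : ℕ → ℝ, (∀ k, X k ∈ Set.Icc Xmin Xmax) → ∀ k, 1 ≤ k →
        0 ≤ delayedInv K v X k ∧ delayedInv K v X k ≤ delayedAcct K v X k)
      ↔ K ≤ 1 / (1 + Xmax))
    ∧ (K ≤ 1 / (1 + Xmax) →
        ∀ X : ℕ → ℝ, (∀ k, X k ∈ Set.Icc Xmin Xmax) →
          ∀ k, 0 ≤ delayedAcct K v X k) := by
  have hKmax : K ≤ 1 / (1 + Xmax) ↔ K * (1 + Xmax) ≤ 1 := le_div_iff₀ (by linarith)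
  have admissible_bounds : ∀ X : ℕ → ℝ, (∀ k, X k ∈ Set.Icc Xmin Xmax) → K * (1 + Xmax) ≤ 1 →
      K ≤ 1 ∧ (∀ k, -1 ≤ X k) ∧ ∀ k, K * (1 + X k) ≤ 1 := fun X hX hK1 =>
    ⟨by nlinarith, fun k => by linarith [(hX k).1],
      fun k => le_trans (by gcongr; exact (hX k).2) hK1⟩
  refine ⟨⟨fun hall => hKmax.2 ?_, fun hKle X hX k hk => ?_⟩, fun hKle X hX k => ?_⟩
  · have hX : ∀ k : ℕ, Xmax ∈ Set.Icc Xmin Xmax := fun _ => ⟨by linarith, le_rfl⟩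
    have hI1 : K * (1 + Xmax) * v ≤ v := (hall (fun _ => Xmax) hX 1 le_rfl).2
    exact (mul_le_iff_le_one_left hv).1 hI1
  · obtain ⟨hK1, hX1, hKX⟩ := admissible_bounds X hX (hKmax.1 hKle)
    exact delayedInv_nonneg_and_le_delayedAcct hK hK1 hX1 hKX hv.le hk
  · obtain ⟨hK1, hX1, hKX⟩ := admissible_bounds X hX (hKmax.1 hKle)
    exact delayedAcct_nonneg hK hK1 hX1 hKX hv.le k
end

section
/- Induction step for delayed self-financing: suppose 0 ≤ K ≤ 1/(1 + X_max), and at stage k ≥ 1 one has V(k−1) ≥ 0, I(k) = K·(1 + X(k−1))·V(k−1) ≥ 0, I(k) ≤ V(k), and X(k) ∈ [X_min, X_max]. Then the next investment I(k+1) = K·(1 + X(k))·V(k) satisfies I(k+1) ≤ V(k+1), where V(k+1) = V(k) + I(k)·X(k). -/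
/-! A gain `x ≥ 0` only adds to the account, and `K ≤ 1 / (1 + Xmax) ≤ 1 / (1 + x)` keeps the new
investment below the current value. A loss `x < 0` is applied to the executed investment `I ≤ V`,
so the new value is at least `(1 + x) V`, which dominates `K (1 + x) V` because `K < 1`. -/

section

variable {K Xmax V I x : ℝ}

lemma kelly_mul_one_add_le_one (hK : K ≤ 1 / (1 + Xmax)) (hx : 0 < 1 + x) (hxX : x ≤ Xmax) :
    K * (1 + x) ≤ 1 :=
  (le_div_iff₀ hx).mp <| hK.trans <| one_div_le_one_div_of_le hx (by linarith)

lemma kelly_lt_one (hK : K ≤ 1 / (1 + Xmax)) (hX : 0 < Xmax) : K < 1 :=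
  hK.trans_lt <| (div_lt_one (by linarith)).mpr (by linarith)

lemma investment_le_value_of_nonneg_return (hK : K * (1 + x) ≤ 1) (hV : 0 ≤ V) (hI : 0 ≤ I)
    (hx : 0 ≤ x) : K * (1 + x) * V ≤ V + I * x :=
  calc K * (1 + x) * V ≤ 1 * V := mul_le_mul_of_nonneg_right hK hV
    _ ≤ V + I * x := by linarith [mul_nonneg hI hx]

lemma investment_le_value_of_nonpos_return (hK : K ≤ 1) (hx1 : 0 ≤ 1 + x) (hx : x ≤ 0)
    (hV : 0 ≤ V) (hIV : I ≤ V) : K * (1 + x) * V ≤ V + I * x :=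
  calc K * (1 + x) * V ≤ 1 * ((1 + x) * V) := by
        rw [mul_assoc]; exact mul_le_mul_of_nonneg_right hK (mul_nonneg hx1 hV)
    _ = V + V * x := by ring
    _ ≤ V + I * x := by linarith [mul_le_mul_of_nonpos_right hIV hx]

end

theorem delayed_self_financing_induction_step_general
    (Xmin Xmax K Vprev Vcur xprev xcur : ℝ)
    (hXmin : -1 < Xmin) (hXmaxPos : 0 < Xmax)
    (hK1 : K ≤ 1 / (1 + Xmax))
    (hI0 : 0 ≤ K * (1 + xprev) * Vprev)
    (hIle : K * (1 + xprev) * Vprev ≤ Vcur)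
    (hx : xcur ∈ Set.Icc Xmin Xmax) :
    K * (1 + xcur) * Vcur ≤ Vcur + (K * (1 + xprev) * Vprev) * xcur := by
  obtain ⟨hxmin, hxmax⟩ := hx
  have hx1 : 0 < 1 + xcur := by linarith
  have hVcur : 0 ≤ Vcur := hI0.trans hIle
  rcases le_or_gt 0 xcur with hgain | hloss
  · exact investment_le_value_of_nonneg_return
      (kelly_mul_one_add_le_one hK1 hx1 hxmax) hVcur hI0 hgain
  · exact investment_le_value_of_nonpos_return
      (kelly_lt_one hK1 hXmaxPos).le hx1.le hloss.le hVcur hIle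

/-- **Induction step for delayed self-financing.** Suppose
`-1 < Xmin < 0 < Xmax` and `0 ≤ K ≤ 1/(1 + Xmax)`, and at stage `k ≥ 1` one
has `V (k-1) ≥ 0` (denoted `Vprev`), a nonnegative executed investment
`I k = K * (1 + X (k-1)) * V (k-1)` (with `X (k-1)` denoted `xprev`),
`I k ≤ V k` (with `V k` denoted `Vcur`), and `X k ∈ [Xmin, Xmax]` (denoted
`xcur`).  Then the next investment `I (k+1) = K * (1 + X k) * V k` satisfies
`I (k+1) ≤ V (k+1)`, where `V (k+1) = V k + I k * X k`. -/
theorem delayed_self_financing_induction_step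
    (Xmin Xmax K Vprev Vcur xprev xcur : ℝ)
    (hXmin : -1 < Xmin) (hXminNeg : Xmin < 0) (hXmaxPos : 0 < Xmax)
    (hK0 : 0 ≤ K) (hK1 : K ≤ 1 / (1 + Xmax))
    (hVprev : 0 ≤ Vprev)
    (hI0 : 0 ≤ K * (1 + xprev) * Vprev)
    (hIle : K * (1 + xprev) * Vprev ≤ Vcur)
    (hx : xcur ∈ Set.Icc Xmin Xmax) :
    K * (1 + xcur) * Vcur ≤ Vcur + (K * (1 + xprev) * Vprev) * xcur :=
  delayed_self_financing_induction_step_general Xmin Xmax K Vprev Vcur xprev xcur hXmin hXmaxPos hK1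
    hI0 hIle hx
end

section
/- Closed-form delayed buy-and-hold log-growth on the binary lattice: let X(0),…,X(n−1) be i.i.d. with P(X(k) = X_max) = p and P(X(k) = X_min) = 1 − p, where −1 < X_min < 0 < X_max < ∞ and p ∈ [0,1], and let 0 ≤ K ≤ 1/(1 + X_max). Then (1/n)·E[log(V(n)/v)] = (1/n)·p·∑_{i=0}^{n−1} p_i·log(1 + K·(1 + X_max)·z_i) + (1/n)·(1 − p)·∑_{i=0}^{n−1} p_i·log(1 + K·(1 + X_min)·z_i), where z_i = (1 + X_max)^i·(1 + X_min)^{n−1−i} − 1 and p_i = C(n−1, i)·p^i·(1 − p)^{n−1−i}. -/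
/-!
Almost surely every return lies in `{Xmin, Xmax}`, so by independence the expectation of any
function of `X 0, …, X (n-1)` is a finite sum over the `2ⁿ` lattice paths, a path with `i`
up-moves having probability `pⁱ (1-p)ⁿ⁻ⁱ`. The first return enters only through the factor
`1 + K (1 + X 0)`, and the other `n - 1` returns only through their number of up-moves, so
counting the subsets of each size produces the binomial weights.
-/

open MeasureTheory ProbabilityTheory Real Finset

theorem Finset.prod_ite_mem_of_subset {ι M : Type*} [CommMonoid M] [DecidableEq ι]
    {s t : Finset ι} (h : t ⊆ s) (x y : M) :
    ∏ i ∈ s, (if i ∈ t then x else y) = x ^ #t * y ^ (#s - #t) := by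
  rw [prod_ite, prod_const, prod_const, filter_mem_eq_inter, inter_eq_right.2 h,
    filter_not, filter_mem_eq_inter, inter_eq_right.2 h, card_sdiff_of_subset h]

theorem Fintype.sum_finset_eq_sum_range_choose {ι R : Type*} [Fintype ι] [DecidableEq ι]
    [AddCommMonoid R] (i₀ : ι) (F : Finset ι → R) (G : ℕ → R)
    (hF : ∀ s ⊆ univ.erase i₀, F s + F (insert i₀ s) = G #s) :
    ∑ t, F t = ∑ k ∈ range (Fintype.card ι), (Fintype.card ι - 1).choose k • G k := by
  have hcard : #(univ.erase i₀) + 1 = Fintype.card ι := by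
    rw [card_erase_of_mem (mem_univ i₀), card_univ,
      Nat.sub_add_cancel (Fintype.card_pos_iff.2 ⟨i₀⟩)]
  rw [← powerset_univ, ← insert_erase (mem_univ i₀),
    sum_powerset_insert (notMem_erase i₀ _), ← sum_add_distrib]
  refine (Finset.sum_congr rfl fun s hs => hF s (mem_powerset.1 hs)).trans ?_
  rw [sum_powerset_apply_card, hcard, ← hcard, Nat.add_sub_cancel]

theorem Fin.prod_Ico_one_eq_prod_univ_erase_zero {M : Type*} [CommMonoid M] (m : ℕ)
    (g : ℕ → M) :
    ∏ k ∈ Ico 1 (m + 1), g k = ∏ i ∈ univ.erase (0 : Fin (m + 1)), g i := by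
  refine Eq.trans ?_ (prod_map _ Fin.valEmbedding g)
  congr 1
  ext k
  simp only [mem_Ico, mem_map, mem_erase, mem_univ, and_true, Fin.valEmbedding_apply]
  constructor
  · intro hk
    exact ⟨⟨k, hk.2⟩, Fin.ne_of_val_ne (Nat.one_le_iff_ne_zero.1 hk.1), rfl⟩
  · rintro ⟨i, hi, rfl⟩
    exact ⟨Nat.one_le_iff_ne_zero.2 (Fin.val_ne_zero_iff.2 hi), i.2⟩

theorem MeasureTheory.ae_eq_or_eq_of_measure_add_eq_one {Ω E : Type*} [MeasurableSpace Ω]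
    [MeasurableSpace E] [MeasurableSingletonClass E] {μ : Measure Ω} [IsProbabilityMeasure μ]
    {Y : Ω → E} (hY : Measurable Y) {a b : E} (hab : a ≠ b)
    (h : μ (Y ⁻¹' {a}) + μ (Y ⁻¹' {b}) = 1) : ∀ᵐ ω ∂μ, Y ω = a ∨ Y ω = b := by
  have hdisj : Disjoint (Y ⁻¹' {a}) (Y ⁻¹' {b}) :=
    Disjoint.preimage _ (Set.disjoint_singleton.2 hab)
  have hmeas := (hY (measurableSet_singleton a)).union (hY (measurableSet_singleton b))
  have := (ae_mem_iff_measure_eq hmeas.nullMeasurableSet).2 <| by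
    rw [measure_union hdisj (hY (measurableSet_singleton b)), h, measure_univ]
  simpa using this

namespace ProbabilityTheory

variable {Ω ι : Type*} [MeasurableSpace Ω] {μ : Measure Ω} [Fintype ι] [DecidableEq ι]
  {Y : ι → Ω → ℝ} {a b p : ℝ}

theorem iIndepFun.measure_iInter_preimage_ite (hind : iIndepFun Y μ) (hp : p ∈ Set.Icc 0 1)
    (ha : ∀ i, μ (Y i ⁻¹' {a}) = ENNReal.ofReal p)
    (hb : ∀ i, μ (Y i ⁻¹' {b}) = ENNReal.ofReal (1 - p)) (t : Finset ι) :
    μ (⋂ i, Y i ⁻¹' {if i ∈ t then a else b})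
      = ENNReal.ofReal (p ^ #t * (1 - p) ^ (Fintype.card ι - #t)) := by
  have hsingle : ∀ i, μ (Y i ⁻¹' {if i ∈ t then a else b})
      = ENNReal.ofReal (if i ∈ t then p else 1 - p) := fun i => by
    split_ifs
    exacts [ha i, hb i]
  rw [hind.meas_iInter fun i => ⟨_, measurableSet_singleton _, rfl⟩,
    Finset.prod_congr rfl fun i _ => hsingle i,
    ← ENNReal.ofReal_prod_of_nonneg fun i _ => by split_ifs <;> linarith [hp.1, hp.2],
    prod_ite_mem_of_subset (subset_univ t), card_univ]

theorem iIndepFun.integral_comp_eq_sum_finset [IsProbabilityMeasure μ]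
    (hY : ∀ i, Measurable (Y i)) (hind : iIndepFun Y μ) (hab : a ≠ b) (hp : p ∈ Set.Icc 0 1)
    (ha : ∀ i, μ (Y i ⁻¹' {a}) = ENNReal.ofReal p)
    (hb : ∀ i, μ (Y i ⁻¹' {b}) = ENNReal.ofReal (1 - p)) (f : (ι → ℝ) → ℝ) :
    ∫ ω, f (fun i => Y i ω) ∂μ
      = ∑ t : Finset ι, p ^ #t * (1 - p) ^ (Fintype.card ι - #t)
          * f (fun i => if i ∈ t then a else b) := by
  set E : Finset ι → Set Ω := fun t => ⋂ i, Y i ⁻¹' {if i ∈ t then a else b}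
  have hE : ∀ t, MeasurableSet (E t) := fun t =>
    MeasurableSet.iInter fun i => hY i (measurableSet_singleton _)
  have hab_ae : ∀ᵐ ω ∂μ, ∀ i, Y i ω = a ∨ Y i ω = b := ae_all_iff.2 fun i =>
    ae_eq_or_eq_of_measure_add_eq_one (hY i) hab <| by
      rw [ha, hb, ← ENNReal.ofReal_add hp.1 (by linarith [hp.2]), add_sub_cancel,
        ENNReal.ofReal_one]
  have hsimple : (fun ω => f (fun i => Y i ω))
      =ᵐ[μ] fun ω =>
        ∑ t, (E t).indicator (fun _ => f (fun i => if i ∈ t then a else b)) ω := by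
    filter_upwards [hab_ae] with ω hω
    have hmemE : ∀ t, ω ∈ E t ↔ t = univ.filter (fun i => Y i ω = a) := fun t => by
      simp only [E, Set.mem_iInter, Set.mem_preimage, Set.mem_singleton_iff]
      constructor
      · intro h
        ext i
        have := h i
        split_ifs at this with hi <;> simp [hi, this, Ne.symm hab]
      · rintro rfl i
        rcases hω i with h | h <;> simp [h, Ne.symm hab]
    rw [Finset.sum_eq_single_of_mem _ (mem_univ _)
        fun t _ ht => Set.indicator_of_notMem (mt (hmemE t).1 ht) _,
      Set.indicator_of_mem ((hmemE _).2 rfl)]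
    congr 1
    funext i
    rcases hω i with h | h <;> simp [h]
  rw [integral_congr_ae hsimple,
    integral_finsetSum _ fun t _ => (integrable_const _).indicator (hE t)]
  refine Finset.sum_congr rfl fun t _ => ?_
  rw [integral_indicator_const _ (hE t), measureReal_def,
    hind.measure_iInter_preimage_ite hp ha hb, smul_eq_mul,
    ENNReal.toReal_ofReal (mul_nonneg (pow_nonneg hp.1 _) (pow_nonneg (sub_nonneg.2 hp.2) _))]

end ProbabilityTheory

/-- `log (V n / v)` along the return path `w`, for `n = m + 1`. -/
noncomputable def delayedLogGrowth {m : ℕ} (K : ℝ) (w : Fin (m + 1) → ℝ) : ℝ :=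
  Real.log (1 + K * (1 + w 0) * (∏ i ∈ univ.erase 0, (1 + w i) - 1))

theorem delayedLogGrowth_ite {m : ℕ} (K a b : ℝ) (t : Finset (Fin (m + 1))) :
    delayedLogGrowth K (fun i => if i ∈ t then a else b)
      = Real.log (1 + K * (1 + if 0 ∈ t then a else b)
          * ((1 + a) ^ #(t.erase 0) * (1 + b) ^ (m - #(t.erase 0)) - 1)) := by
  have hprod : ∏ i ∈ univ.erase 0, (1 + if i ∈ t then a else b)
      = ∏ i ∈ univ.erase 0, (if i ∈ t.erase 0 then 1 + a else 1 + b) :=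
    Finset.prod_congr rfl fun i hi => by
      simp only [mem_erase, ne_of_mem_erase hi, ne_eq, not_false_eq_true, true_and, add_ite]
  rw [delayedLogGrowth, hprod, prod_ite_mem_of_subset (erase_subset_erase 0 (subset_univ t)),
    card_erase_of_mem (mem_univ _), card_univ, Fintype.card_fin, Nat.add_sub_cancel]

theorem binary_lattice_delayed_buy_hold_growth_general
    {Ω : Type*} [MeasureSpace Ω] [IsProbabilityMeasure (ℙ : Measure Ω)]
    (n : ℕ) (hn : 1 ≤ n)
    (Xmin Xmax : ℝ) (hXminNeg : Xmin < 0) (hXmaxPos : 0 < Xmax)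
    (p : ℝ) (hp : p ∈ Set.Icc (0:ℝ) 1)
    (X : ℕ → Ω → ℝ) (hmeas : ∀ i, Measurable (X i))
    (hindep : iIndepFun (m := fun _ : Fin n => Real.measurableSpace)
      (fun i : Fin n => X i) ℙ)
    (hmax : ∀ i < n, ℙ {ω | X i ω = Xmax} = ENNReal.ofReal p)
    (hmin : ∀ i < n, ℙ {ω | X i ω = Xmin} = ENNReal.ofReal (1 - p))
    (K v : ℝ) (hv : 0 < v) :
    (1 / (n : ℝ)) *
        ∫ ω, Real.log
          (((1 + K * (1 + X 0 ω) * (∏ k ∈ Finset.Ico 1 n, (1 + X k ω) - 1)) * v) / v) ∂ℙ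
      = (1 / (n : ℝ)) * p *
          ∑ i ∈ Finset.range n,
            ((n - 1).choose i : ℝ) * p ^ i * (1 - p) ^ (n - 1 - i) *
              Real.log (1 + K * (1 + Xmax) *
                ((1 + Xmax) ^ i * (1 + Xmin) ^ (n - 1 - i) - 1))
        + (1 / (n : ℝ)) * (1 - p) *
            ∑ i ∈ Finset.range n,
              ((n - 1).choose i : ℝ) * p ^ i * (1 - p) ^ (n - 1 - i) *
                Real.log (1 + K * (1 + Xmin) *
                  ((1 + Xmax) ^ i * (1 + Xmin) ^ (n - 1 - i) - 1)) := by
  obtain ⟨m, rfl⟩ : ∃ m, n = m + 1 := ⟨n - 1, by omega⟩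
  have hpath : ∀ ω, Real.log
        (((1 + K * (1 + X 0 ω) * (∏ k ∈ Ico 1 (m + 1), (1 + X k ω) - 1)) * v) / v)
      = delayedLogGrowth K (fun i : Fin (m + 1) => X i ω) := fun ω => by
    rw [mul_div_cancel_right₀ _ hv.ne', Fin.prod_Ico_one_eq_prod_univ_erase_zero]
    rfl
  rw [integral_congr_ae (.of_forall hpath),
    hindep.integral_comp_eq_sum_finset (Y := fun i : Fin (m + 1) => X i) (fun i => hmeas i)
      (hXminNeg.trans hXmaxPos).ne' hp (fun i => hmax i i.2) (fun i => hmin i i.2),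
    Fintype.sum_finset_eq_sum_range_choose 0 _ fun k => p ^ k * (1 - p) ^ (m - k) *
      ((1 - p) * Real.log (1 + K * (1 + Xmin) * ((1 + Xmax) ^ k * (1 + Xmin) ^ (m - k) - 1))
        + p * Real.log (1 + K * (1 + Xmax) * ((1 + Xmax) ^ k * (1 + Xmin) ^ (m - k) - 1)))]
  · simp only [Fintype.card_fin, Nat.add_sub_cancel, nsmul_eq_mul, mul_sum, ← sum_add_distrib]
    exact Finset.sum_congr rfl fun k _ => by ring
  · intro s hs
    have h0 : (0 : Fin (m + 1)) ∉ s := fun h => notMem_erase 0 univ (hs h)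
    have hcard : #s ≤ m := by simpa using card_le_card hs
    simp only [delayedLogGrowth_ite, erase_insert h0, erase_eq_of_notMem h0, if_neg h0,
      mem_insert_self, if_true, card_insert_of_notMem h0, Fintype.card_fin, Nat.add_sub_add_right,
      show m + 1 - #s = m - #s + 1 by omega, pow_succ]
    ring

/-- **Closed-form delayed buy-and-hold log-growth on the binary lattice.**
Let `X 0, …, X (n-1)` be i.i.d. with `P(X k = Xmax) = p` and
`P(X k = Xmin) = 1 - p`, where `-1 < Xmin < 0 < Xmax` and `p ∈ [0,1]`, and let
`0 ≤ K ≤ 1/(1 + Xmax)`.  With the one-step-delayed buy-and-holder's account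
value `V n = (1 + K·(1 + X 0)·(∏_{k=1}^{n-1} (1 + X k) - 1))·v` (initial value
`v > 0`), the per-period expected log-growth `(1/n)·E[log (V n / v)]` equals
`(1/n)·p·∑_{i<n} pᵢ·log (1 + K·(1 + Xmax)·zᵢ)
  + (1/n)·(1-p)·∑_{i<n} pᵢ·log (1 + K·(1 + Xmin)·zᵢ)`,
where `zᵢ = (1 + Xmax)^i·(1 + Xmin)^(n-1-i) - 1` and
`pᵢ = C(n-1, i)·p^i·(1-p)^(n-1-i)`. -/
theorem binary_lattice_delayed_buy_hold_growth
    {Ω : Type*} [MeasureSpace Ω] [IsProbabilityMeasure (ℙ : Measure Ω)]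
    (n : ℕ) (hn : 1 ≤ n)
    (Xmin Xmax : ℝ) (hXmin : -1 < Xmin) (hXminNeg : Xmin < 0) (hXmaxPos : 0 < Xmax)
    (p : ℝ) (hp : p ∈ Set.Icc (0:ℝ) 1)
    (X : ℕ → Ω → ℝ) (hmeas : ∀ i, Measurable (X i))
    (hindep : iIndepFun (m := fun _ : Fin n => Real.measurableSpace)
      (fun i : Fin n => X i) ℙ)
    (hmax : ∀ i < n, ℙ {ω | X i ω = Xmax} = ENNReal.ofReal p)
    (hmin : ∀ i < n, ℙ {ω | X i ω = Xmin} = ENNReal.ofReal (1 - p))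
    (K v : ℝ) (hv : 0 < v) (hK0 : 0 ≤ K) (hK1 : K ≤ 1 / (1 + Xmax)) :
    (1 / (n : ℝ)) *
        ∫ ω, Real.log
          (((1 + K * (1 + X 0 ω) * (∏ k ∈ Finset.Ico 1 n, (1 + X k ω) - 1)) * v) / v) ∂ℙ
      = (1 / (n : ℝ)) * p *
          ∑ i ∈ Finset.range n,
            ((n - 1).choose i : ℝ) * p ^ i * (1 - p) ^ (n - 1 - i) *
              Real.log (1 + K * (1 + Xmax) *
                ((1 + Xmax) ^ i * (1 + Xmin) ^ (n - 1 - i) - 1))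
        + (1 / (n : ℝ)) * (1 - p) *
            ∑ i ∈ Finset.range n,
              ((n - 1).choose i : ℝ) * p ^ i * (1 - p) ^ (n - 1 - i) *
                Real.log (1 + K * (1 + Xmin) *
                  ((1 + Xmax) ^ i * (1 + Xmin) ^ (n - 1 - i) - 1)) :=
  binary_lattice_delayed_buy_hold_growth_general n hn Xmin Xmax hXminNeg hXmaxPos p hp X hmeas
    hindep hmax hmin K v hv
end
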